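/- arXiv:2410.08956 — 7 statements merged into one kernel-verified Lean document; each statement's English description precedes it below -/
import Mathlib

section
/- For every integer t ≥ 1 and real numbers 0 < α < β < 1, the polynomial f_t^⋆(λ) := ∏_{s=0}^{t−1} (λ − r_{s,t})/(1 − r_{s,t}), where r_{s,t} := α·(cos(π(s+1/2)/t) + cos(π/(2t)))/(1 + cos(π/(2t))), belongs to 𝒫_t' and minimizes the ratio objective: min_{λ∈[β,1]} |f_t^⋆(λ)| > 0 and R(f_t^⋆) ≤ R(g) for every g ∈ 𝒫_t' with min_{λ∈[β,1]} |g(λ)| > 0. -/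
open Polynomial Real

lemma C2eq : (C 2 : ℝ[X]) = 2 := map_ofNat C 2

lemma cheb_deg (n : ℕ) : ((Polynomial.Chebyshev.T ℝ ((n:ℤ)+1)).natDegree = n+1) ∧
    ((Polynomial.Chebyshev.T ℝ ((n:ℤ)+1)).coeff (n+1) = 2^n) := by
  induction n using Nat.twoStepInduction with
  | zero =>
    norm_num [Polynomial.Chebyshev.T_one]
  | one =>
    have h2 : Polynomial.Chebyshev.T ℝ (((1:ℕ):ℤ)+1) = C 2 * X^2 - C 1 := by
      have h := Polynomial.Chebyshev.T_add_two ℝ 0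
      norm_num [Polynomial.Chebyshev.T_one, Polynomial.Chebyshev.T_zero] at h
      rw [show (((1:ℕ):ℤ)+1) = (2:ℤ) by norm_num, h, C2eq, map_one]
      ring
    rw [h2]
    constructor
    · compute_degree!
    · simp [coeff_sub, Polynomial.coeff_C, Polynomial.coeff_one]
  | more n ih1 ih2 =>
    have hn1 : ((n+1:ℕ):ℤ) = (n:ℤ)+1 := by push_cast; ring
    have hn2 : ((n+2:ℕ):ℤ)+1 = ((n:ℤ)+1)+2 := by push_cast; ring
    rw [hn1] at ih2
    obtain ⟨hd1, hc1⟩ := ih1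
    obtain ⟨hd2, hc2⟩ := ih2
    have hrec : Polynomial.Chebyshev.T ℝ (((n+2:ℕ):ℤ)+1) =
        2 * X * Polynomial.Chebyshev.T ℝ (((n:ℤ)+1)+1) - Polynomial.Chebyshev.T ℝ ((n:ℤ)+1) := by
      rw [hn2, Polynomial.Chebyshev.T_add_two]
    have hTne : (Polynomial.Chebyshev.T ℝ (((n:ℤ)+1)+1)) ≠ 0 := by
      intro h; rw [h] at hc2; simp at hc2
      exact absurd hc2.symm (by positivity)
    have hXne : (2 * X : ℝ[X]) ≠ 0 := by
      intro h
      have := congrArg (fun p => Polynomial.coeff p 1) h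
      simp at this
    have hXd : (2 * X : ℝ[X]).natDegree = 1 := by
      rw [← C2eq]; compute_degree!
    have hmul : (2 * X * Polynomial.Chebyshev.T ℝ (((n:ℤ)+1)+1)).natDegree = n + 3 := by
      rw [natDegree_mul hXne hTne, hXd, hd2]; omega
    have hdlt : (Polynomial.Chebyshev.T ℝ ((n:ℤ)+1)).natDegree <
        (2 * X * Polynomial.Chebyshev.T ℝ (((n:ℤ)+1)+1)).natDegree := by
      rw [hmul, hd1]; omega
    constructor
    · rw [hrec, Polynomial.natDegree_sub_eq_left_of_natDegree_lt hdlt, hmul]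
    · rw [hrec, coeff_sub]
      have hz : (Polynomial.Chebyshev.T ℝ ((n:ℤ)+1)).coeff (n+2+1) = 0 :=
        coeff_eq_zero_of_natDegree_lt (by rw [hd1]; omega)
      have hc : (2 * X * Polynomial.Chebyshev.T ℝ (((n:ℤ)+1)+1)).coeff (n+2+1) = 2^(n+2) := by
        rw [show (2 * X * Polynomial.Chebyshev.T ℝ (((n:ℤ)+1)+1) : ℝ[X])
            = C 2 * (X * Polynomial.Chebyshev.T ℝ (((n:ℤ)+1)+1)) by rw [C2eq]; ring,
          coeff_C_mul, Polynomial.coeff_X_mul]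
        rw [show n+2 = n+1+1 from rfl, hc2]; ring
      rw [hz, hc, sub_zero]

open Finset

lemma prod_eq_T (t : ℕ) (ht : 1 ≤ t) :
    Polynomial.Chebyshev.T ℝ (t:ℤ) =
      C ((2:ℝ)^(t-1)) * ∏ s ∈ Finset.range t,
        (X - C (Real.cos (π * ((s:ℝ)+1/2) / (t:ℝ)))) := by
  set a : ℕ → ℝ := fun s => π * ((s:ℝ)+1/2) / (t:ℝ) with ha
  have htR : (0:ℝ) < t := by exact_mod_cast ht
  have hamem : ∀ s ∈ Finset.range t, a s ∈ Set.Icc (0:ℝ) π := by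
    intro s hs
    rw [Finset.mem_range] at hs
    constructor
    · positivity
    · rw [ha]
      rw [div_le_iff₀ htR]
      have : (s:ℝ) + 1/2 ≤ (t:ℝ) := by
        have : (s:ℝ) + 1 ≤ (t:ℝ) := by exact_mod_cast hs
        linarith
      nlinarith [Real.pi_pos]
  have hainj : Set.InjOn (fun s : ℕ => Real.cos (a s)) (Finset.range t) := by
    intro s1 h1 s2 h2 he
    have haeq : a s1 = a s2 := Real.injOn_cos (hamem s1 h1) (hamem s2 h2) he
    rw [ha] at haeq
    simp only at haeq
    field_simp at haeq
    have : (s1:ℝ) = s2 := by linarith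
    exact_mod_cast this
  set P : ℝ[X] := ∏ s ∈ Finset.range t, (X - C (Real.cos (a s))) with hP
  have hPm : P.Monic := monic_prod_of_monic _ _ (fun s _ => monic_X_sub_C _)
  have hPd : P.natDegree = t := by
    rw [hP, natDegree_prod _ _ (fun s _ => X_sub_C_ne_zero _)]
    simp [natDegree_X_sub_C]
  obtain ⟨hTd', hTc'⟩ := cheb_deg (t-1)
  have htcast : ((t-1:ℕ):ℤ)+1 = (t:ℤ) := by omega
  rw [htcast] at hTd' hTc'
  have ht1 : t - 1 + 1 = t := by omega
  rw [ht1] at hTd' hTc'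
  have hTne : Polynomial.Chebyshev.T ℝ (t:ℤ) ≠ 0 := by
    intro h; rw [h] at hTc'; simp at hTc'
    exact absurd hTc'.symm (by positivity)
  have hCP : (C ((2:ℝ)^(t-1)) * P).natDegree = t := by
    rw [natDegree_C_mul (by positivity), hPd]
  have hCPlc : (C ((2:ℝ)^(t-1)) * P).leadingCoeff = (2:ℝ)^(t-1) := by
    rw [leadingCoeff_mul, leadingCoeff_C, hPm.leadingCoeff, mul_one]
  have hCPne : C ((2:ℝ)^(t-1)) * P ≠ 0 := by
    intro h
    rw [h] at hCPlc
    simp at hCPlc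
    exact absurd hCPlc.symm (by positivity)
  set q : ℝ[X] := Polynomial.Chebyshev.T ℝ (t:ℤ) - C ((2:ℝ)^(t-1)) * P with hq
  by_cases hq0 : q = 0
  · rw [← sub_eq_zero]; exact hq0
  exfalso
  have hdeg : q.degree < (t:WithBot ℕ) := by
    have := Polynomial.degree_sub_lt
      (p := Polynomial.Chebyshev.T ℝ (t:ℤ)) (q := C ((2:ℝ)^(t-1)) * P)
      (by rw [degree_eq_natDegree hTne, degree_eq_natDegree hCPne, hTd', hCP]) hTne
      (by rw [hCPlc, Polynomial.leadingCoeff, hTd', hTc'])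
    rw [degree_eq_natDegree hTne, hTd'] at this
    exact this
  have hqd : q.natDegree < t := by
    rwa [← Polynomial.natDegree_lt_iff_degree_lt hq0] at hdeg
  -- roots
  have hroot : ∀ s ∈ Finset.range t, q.eval (Real.cos (a s)) = 0 := by
    intro s hs
    rw [hq, eval_sub, eval_mul, eval_C, eval_prod]
    have h1 : (Polynomial.Chebyshev.T ℝ (t:ℤ)).eval (Real.cos (a s)) = 0 := by
      rw [Polynomial.Chebyshev.T_real_cos]
      have : (t:ℝ) * a s = π * s + π/2 := by
        rw [ha]; field_simp
      rw [Int.cast_natCast, this, show π * (s:ℝ) + π/2 = (s:ℝ)*π + π/2 by ring,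
        Real.cos_add_pi_div_two, Real.sin_nat_mul_pi, neg_zero]
    have h2 : ∏ s' ∈ Finset.range t, (Real.cos (a s) - Real.cos (a s')) = 0 :=
      Finset.prod_eq_zero hs (by simp)
    simp only [eval_sub, eval_X, eval_C] at *
    rw [h1, h2, mul_zero, sub_zero]
  have hsub : (Finset.range t).image (fun s => Real.cos (a s)) ⊆ q.roots.toFinset := by
    intro x hx
    rw [Finset.mem_image] at hx
    obtain ⟨s, hs, rfl⟩ := hx
    rw [Multiset.mem_toFinset, Polynomial.mem_roots']
    exact ⟨hq0, hroot s hs⟩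
  have hcard : t ≤ q.natDegree := by
    calc t = ((Finset.range t).image (fun s => Real.cos (a s))).card := by
            rw [Finset.card_image_of_injOn (by exact_mod_cast hainj), Finset.card_range]
      _ ≤ q.roots.toFinset.card := Finset.card_le_card hsub
      _ ≤ Multiset.card q.roots := Multiset.toFinset_card_le _
      _ ≤ q.natDegree := Polynomial.card_roots' q
  omega


/-- The ratio objective `R(f) = (max_{λ∈[0,α]} |f(λ)|) / (min_{λ∈[β,1]} |f(λ)|)`. -/
noncomputable def ratioObjective (α β : ℝ) (f : Polynomial ℝ) : ℝ :=
  sSup ((fun x => |f.eval x|) '' Set.Icc 0 α) / sInf ((fun x => |f.eval x|) '' Set.Icc β 1)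

-- helper IVT for polynomials
lemma ivt_root (p : Polynomial ℝ) (a b : ℝ) (hab : a < b)
    (h : p.eval a * p.eval b < 0) : ∃ z ∈ Set.Ioo a b, p.eval z = 0 := by
  have hc : ContinuousOn (fun x => p.eval x) (Set.Icc a b) :=
    (Polynomial.continuous p).continuousOn
  rcases lt_or_ge (p.eval a) 0 with hna | hpa
  · have hpb : 0 < p.eval b := by nlinarith
    obtain ⟨z, hz, hz0⟩ := intermediate_value_Ioo (le_of_lt hab) hc
      (show (0:ℝ) ∈ Set.Ioo (p.eval a) (p.eval b) from ⟨hna, hpb⟩)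
    exact ⟨z, hz, hz0⟩
  · have hpa' : 0 < p.eval a := by
      rcases hpa.lt_or_eq with h' | h'
      · exact h'
      · exfalso; rw [← h'] at h; simp at h
    have hpb : p.eval b < 0 := by nlinarith
    obtain ⟨z, hz, hz0⟩ := intermediate_value_Ioo' (le_of_lt hab) hc
      (show (0:ℝ) ∈ Set.Ioo (p.eval b) (p.eval a) from ⟨hpb, hpa'⟩)
    exact ⟨z, hz, hz0⟩


set_option maxHeartbeats 2000000 in
theorem optimal_band_polynomial (t : ℕ) (ht : 1 ≤ t) (α β : ℝ)
    (h0α : 0 < α) (hαβ : α < β) (hβ1 : β < 1)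
    (r : ℕ → ℝ)
    (hr : ∀ s, r s = α * (Real.cos (Real.pi * ((s : ℝ) + 1/2) / (t : ℝ)) +
        Real.cos (Real.pi / (2 * (t : ℝ)))) / (1 + Real.cos (Real.pi / (2 * (t : ℝ)))))
    (f : Polynomial ℝ)
    (hf : f = ∏ s ∈ Finset.range t,
        Polynomial.C ((1 - r s)⁻¹) * (Polynomial.X - Polynomial.C (r s))) :
    (f.natDegree ≤ t ∧ f.eval 0 = 0 ∧ f.eval 1 = 1) ∧
    0 < sInf ((fun x => |f.eval x|) '' Set.Icc β 1) ∧
    ∀ g : Polynomial ℝ, g.natDegree ≤ t → g.eval 0 = 0 → g.eval 1 = 1 →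
      0 < sInf ((fun x => |g.eval x|) '' Set.Icc β 1) →
      ratioObjective α β f ≤ ratioObjective α β g := by
  have htR : (0:ℝ) < t := by exact_mod_cast ht
  set a : ℕ → ℝ := fun s => π * ((s:ℝ)+1/2) / (t:ℝ) with ha
  set c : ℝ := Real.cos (π / (2 * (t:ℝ))) with hcdef
  have hpi := Real.pi_pos
  have ht1R : (1:ℝ) ≤ t := by exact_mod_cast ht
  have hq2t : 0 < π / (2*(t:ℝ)) := by positivity
  have hc0 : 0 ≤ c := by
    apply Real.cos_nonneg_of_mem_Icc
    constructor
    · linarith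
    · rw [div_le_div_iff₀ (by positivity) (by norm_num)]
      nlinarith
  have hc1 : c < 1 := by
    rw [hcdef]
    have h2t : π / (2*(t:ℝ)) ≤ π := by
      rw [div_le_iff₀ (by positivity)]
      nlinarith
    have := Real.strictAntiOn_cos (Set.mem_Icc.mpr ⟨le_refl 0, hpi.le⟩)
      (Set.mem_Icc.mpr ⟨hq2t.le, h2t⟩) hq2t
    simpa using this
  have h1c : (0:ℝ) < 1 + c := by linarith
  have hra : ∀ s, r s = α * (Real.cos (a s) + c)/(1+c) := fun s => hr s
  have hrle : ∀ s, r s ≤ α := by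
    intro s
    rw [hra s, div_le_iff₀ h1c]
    nlinarith [Real.cos_le_one (a s)]
  have hrlt1 : ∀ s, r s < 1 := fun s => lt_of_le_of_lt (hrle s) (hαβ.trans hβ1)
  have hr1pos : ∀ s, 0 < 1 - r s := fun s => by linarith [hrlt1 s]
  have hamem : ∀ s ∈ Finset.range t, a s ∈ Set.Icc (0:ℝ) π := by
    intro s hs
    rw [Finset.mem_range] at hs
    constructor
    · rw [ha]; positivity
    · rw [ha]
      rw [div_le_iff₀ htR]
      have : (s:ℝ) + 1/2 ≤ (t:ℝ) := by
        have : (s:ℝ) + 1 ≤ (t:ℝ) := by exact_mod_cast hs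
        linarith
      nlinarith
  have haPos : ∀ s, 0 < a s := by intro s; rw [ha]; positivity
  have hcoslt1 : ∀ s ∈ Finset.range t, Real.cos (a s) < 1 := by
    intro s hs
    have := Real.strictAntiOn_cos (Set.mem_Icc.mpr ⟨le_refl 0, hpi.le⟩)
      (hamem s hs) (haPos s)
    simpa using this
  have hrltα : ∀ s ∈ Finset.range t, r s < α := by
    intro s hs
    rw [hra s, div_lt_iff₀ h1c]
    nlinarith [hcoslt1 s hs]
  set F : ℝ → ℝ := fun x => ∏ s ∈ Finset.range t, ((1 - r s)⁻¹ * (x - r s)) with hF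
  have hfeval : ∀ x, f.eval x = F x := by
    intro x; rw [hf]; simp [eval_prod, hF]
  set u : ℝ → ℝ := fun x => (1+c)*x/α - c with hu
  have hprodT : ∀ x : ℝ, (Polynomial.Chebyshev.T ℝ (t:ℤ)).eval x
      = 2^(t-1) * ∏ s ∈ Finset.range t, (x - Real.cos (a s)) := by
    intro x
    conv_lhs => rw [prod_eq_T t ht]
    rw [ha]
    simp [eval_prod]
  have hxr : ∀ (x : ℝ) (s : ℕ), x - r s = (α/(1+c)) * (u x - Real.cos (a s)) := by
    intro x s
    rw [hra s, hu]
    simp only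
    field_simp
    ring
  have hgen : ∀ x : ℝ, F x = ((∏ s ∈ Finset.range t, (1 - r s)⁻¹) * (α/(1+c))^t / 2^(t-1))
      * (Polynomial.Chebyshev.T ℝ (t:ℤ)).eval (u x) := by
    intro x
    rw [hF]
    simp only
    rw [Finset.prod_mul_distrib]
    have h1 : ∏ s ∈ Finset.range t, (x - r s)
        = (α/(1+c))^t * ∏ s ∈ Finset.range t, (u x - Real.cos (a s)) := by
      rw [Finset.prod_congr rfl (fun s _ => hxr x s), Finset.prod_mul_distrib,
        Finset.prod_const, Finset.card_range]
    rw [h1, hprodT (u x)]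
    set Q := ∏ s ∈ Finset.range t, (u x - Real.cos (a s)) with hQ
    set N := ∏ s ∈ Finset.range t, (1 - r s)⁻¹ with hN
    have h2 : ((2:ℝ))^(t-1) ≠ 0 := by positivity
    field_simp
  have huα : u α = 1 := by
    rw [hu]; simp only; field_simp; ring
  have hT1 : (Polynomial.Chebyshev.T ℝ (t:ℤ)).eval (1:ℝ) = 1 := by
    have h := Polynomial.Chebyshev.T_real_cos 0 (t:ℤ)
    simpa using h
  have hFkey : ∀ x, F x = F α * (Polynomial.Chebyshev.T ℝ (t:ℤ)).eval (u x) := by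
    intro x
    rw [hgen x, hgen α, huα, hT1, mul_one]
  have hFpos : ∀ x, α < x → 0 < F x := by
    intro x hx
    rw [hF]
    exact Finset.prod_pos fun s hs =>
      mul_pos (inv_pos.mpr (hr1pos s)) (by linarith [hrle s])
  have hFβpos : 0 < F β := hFpos β hαβ
  have hFαpos : 0 < F α := by
    rw [hF]
    exact Finset.prod_pos fun s hs =>
      mul_pos (inv_pos.mpr (hr1pos s)) (by linarith [hrltα s hs])
  have hFmono : ∀ x, β ≤ x → F β ≤ F x := by
    intro x hx
    rw [hF]
    apply Finset.prod_le_prod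
    · intro s hs
      have h1 : (0:ℝ) < (1 - r s)⁻¹ := inv_pos.mpr (hr1pos s)
      nlinarith [hrle s]
    · intro s hs
      have h1 : (0:ℝ) < (1 - r s)⁻¹ := inv_pos.mpr (hr1pos s)
      nlinarith [hrle s]
  have hr0 : r (t-1) = 0 := by
    have hacast : a (t-1) = π - π/(2*(t:ℝ)) := by
      rw [ha]
      simp only
      have hcast : ((t-1:ℕ):ℝ) = (t:ℝ) - 1 := by
        rw [Nat.cast_sub ht]; simp
      rw [hcast]
      field_simp
      ring
    have hceq : Real.cos (a (t-1)) = -c := by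
      rw [hacast, Real.cos_pi_sub, hcdef]
    rw [hra, hceq]
    simp
  have hF0 : F 0 = 0 := by
    rw [hF]
    simp only
    apply Finset.prod_eq_zero (Finset.mem_range.mpr (by omega : t-1 < t))
    rw [hr0]
    simp
  have hF1 : F 1 = 1 := by
    rw [hF]
    simp only
    apply Finset.prod_eq_one
    intro s hs
    exact inv_mul_cancel₀ (ne_of_gt (hr1pos s))
  have hdeg : f.natDegree ≤ t := by
    rw [hf]
    refine le_trans (Polynomial.natDegree_prod_le _ _) ?_
    refine le_trans (Finset.sum_le_sum (g := fun _ => 1)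
      (fun s _ => le_trans (Polynomial.natDegree_C_mul_le _ _)
        (le_of_eq (Polynomial.natDegree_X_sub_C _)))) ?_
    simp
  have hinff : sInf ((fun x => |f.eval x|) '' Set.Icc β 1) = F β := by
    apply le_antisymm
    · apply csInf_le
      · refine ⟨0, ?_⟩
        rintro y ⟨x, hx, rfl⟩
        positivity
      · exact ⟨β, ⟨le_refl β, by linarith⟩, by simp only [hfeval]; exact abs_of_pos hFβpos⟩
    · apply le_csInf
      · exact ⟨|f.eval β|, ⟨β, ⟨le_refl _, by linarith⟩, rfl⟩⟩
      · rintro y ⟨x, hx, rfl⟩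
        simp only [hfeval]
        rw [abs_of_pos (hFpos x (by linarith [hx.1]))]
        exact hFmono x hx.1
  have hTle : ∀ y ∈ Set.Icc (-1:ℝ) 1, |(Polynomial.Chebyshev.T ℝ (t:ℤ)).eval y| ≤ 1 := by
    intro y hy
    obtain ⟨θ, hθ, rfl⟩ := Real.surjOn_cos hy
    rw [Polynomial.Chebyshev.T_real_cos]
    exact Real.abs_cos_le_one _
  have humem : ∀ x ∈ Set.Icc (0:ℝ) α, u x ∈ Set.Icc (-1:ℝ) 1 := by
    intro x hx
    obtain ⟨hx0, hxα⟩ := hx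
    rw [hu]
    simp only
    constructor
    · have h1 : 0 ≤ (1+c)*x/α := by positivity
      linarith
    · have h1 : (1+c)*x/α ≤ 1+c := by
        rw [div_le_iff₀ h0α]
        nlinarith
      linarith
  have hFle : ∀ x ∈ Set.Icc (0:ℝ) α, |F x| ≤ F α := by
    intro x hx
    rw [hFkey x, abs_mul, abs_of_pos hFαpos]
    calc F α * |(Polynomial.Chebyshev.T ℝ (t:ℤ)).eval (u x)| ≤ F α * 1 :=
          mul_le_mul_of_nonneg_left (hTle (u x) (humem x hx)) hFαpos.le
      _ = F α := mul_one _
  have hsupf : sSup ((fun x => |f.eval x|) '' Set.Icc 0 α) = F α := by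
    apply le_antisymm
    · apply csSup_le
      · exact ⟨|f.eval 0|, ⟨0, ⟨le_refl _, h0α.le⟩, rfl⟩⟩
      · rintro y ⟨x, hx, rfl⟩
        simp only [hfeval]
        exact hFle x hx
    · apply le_csSup
      · refine ⟨F α, ?_⟩
        rintro y ⟨x, hx, rfl⟩
        simp only [hfeval]
        exact hFle x hx
      · exact ⟨α, ⟨h0α.le, le_refl _⟩, by simp only [hfeval]; exact abs_of_pos hFαpos⟩
  refine ⟨⟨hdeg, by rw [hfeval]; exact hF0, by rw [hfeval]; exact hF1⟩,
    by rw [hinff]; exact hFβpos, ?_⟩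
  intro g hgdeg hg0 hg1 hIg
  unfold ratioObjective
  rw [hsupf, hinff]
  set Sg := sSup ((fun x => |g.eval x|) '' Set.Icc 0 α) with hSgdef
  set Ig := sInf ((fun x => |g.eval x|) '' Set.Icc β 1) with hIgdef
  by_contra hcon
  push_neg at hcon
  have hgc : Continuous (fun x => g.eval x) := Polynomial.continuous g
  have hIle : ∀ y ∈ Set.Icc β 1, Ig ≤ |g.eval y| := by
    intro y hy
    exact csInf_le ⟨0, by rintro zz ⟨x, hx, rfl⟩; positivity⟩ ⟨y, hy, rfl⟩
  have hgβpos : 0 < g.eval β := by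
    rcases lt_trichotomy (g.eval β) 0 with hlt | heq | hgt
    · exfalso
      obtain ⟨ζ, hζ, hζ0⟩ := intermediate_value_Icc (show β ≤ 1 by linarith)
        hgc.continuousOn
        (show (0:ℝ) ∈ Set.Icc (g.eval β) (g.eval 1) by
          rw [hg1]; exact ⟨hlt.le, zero_le_one⟩)
      have h2 := hIle ζ hζ
      simp only at hζ0
      rw [hζ0] at h2
      simp at h2
      linarith
    · exfalso
      have h2 := hIle β ⟨le_refl _, hβ1.le⟩
      rw [heq] at h2
      simp at h2
      linarith
    · exact hgt
  have hIgβ : Ig ≤ g.eval β := by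
    have h2 := hIle β ⟨le_refl _, hβ1.le⟩
    rwa [abs_of_pos hgβpos] at h2
  have hSgb : ∀ x ∈ Set.Icc (0:ℝ) α, |g.eval x| ≤ Sg := by
    intro x hx
    exact le_csSup (IsCompact.bddAbove_image isCompact_Icc
      (continuous_abs.comp hgc).continuousOn) ⟨x, hx, rfl⟩
  have hkeyineq : Sg * F β < F α * Ig := by
    rwa [div_lt_div_iff₀ hIg hFβpos] at hcon
  set xx : ℕ → ℝ := fun k => α * (Real.cos ((k:ℝ)*π/(t:ℝ)) + c)/(1+c) with hxx
  have hxx0 : xx 0 = α := by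
    rw [hxx]; simp only [Nat.cast_zero, zero_mul, zero_div, Real.cos_zero]
    field_simp
  have huxx : ∀ k, u (xx k) = Real.cos ((k:ℝ)*π/t) := by
    intro k
    rw [hu, hxx]
    simp only
    field_simp
    ring
  have hargmem : ∀ k, k ≤ t → (k:ℝ)*π/(t:ℝ) ∈ Set.Icc (0:ℝ) π := by
    intro k hk
    have hkR : (k:ℝ) ≤ t := by exact_mod_cast hk
    constructor
    · positivity
    · rw [div_le_iff₀ htR]
      nlinarith
  have hxanti : ∀ m n, m < n → n ≤ t → xx n < xx m := by
    intro m n hmn hn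
    have h1 : Real.cos ((n:ℝ)*π/t) < Real.cos ((m:ℝ)*π/t) := by
      apply Real.strictAntiOn_cos (hargmem m (by omega)) (hargmem n hn)
      have hmn' : (m:ℝ) < n := by exact_mod_cast hmn
      rw [div_lt_div_iff₀ htR htR]
      nlinarith [mul_pos hpi htR]
    rw [hxx]
    simp only
    rw [div_lt_div_iff₀ h1c h1c]
    nlinarith [mul_pos h0α h1c]
  have hFxx : ∀ k, F (xx k) = F α * (-1:ℝ)^k := by
    intro k
    rw [hFkey, huxx, Polynomial.Chebyshev.T_real_cos]
    congr 1
    have harg : ((t:ℤ):ℝ) * ((k:ℝ)*π/t) = (k:ℝ)*π - 0 := by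
      push_cast
      field_simp
      ring
    rw [harg, Real.cos_nat_mul_pi_sub, Real.cos_zero, mul_one]
  have hxtneg : xx t < 0 := by
    rw [hxx]
    simp only
    have hπt : (t:ℝ)*π/t = π := by field_simp
    rw [hπt, Real.cos_pi]
    have h1 : -1 + c < 0 := by linarith
    have h2 : α * (-1 + c) < 0 := by nlinarith
    exact div_neg_of_neg_of_pos (by nlinarith) h1c
  have hxt1pos : 0 < xx (t-1) := by
    rw [hxx]
    simp only
    have hcast : ((t-1:ℕ):ℝ) = (t:ℝ) - 1 := by
      rw [Nat.cast_sub ht]; simp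
    have harg : ((t-1:ℕ):ℝ)*π/t = π - π/t := by
      rw [hcast]; field_simp
    rw [harg, Real.cos_pi_sub]
    have hcc : Real.cos (π/t) < c := by
      rw [hcdef]
      apply Real.strictAntiOn_cos
      · constructor
        · positivity
        · rw [div_le_iff₀ (by positivity)]
          nlinarith
      · constructor
        · positivity
        · rw [div_le_iff₀ htR]
          nlinarith
      · rw [div_lt_div_iff₀ (by positivity) htR]
        nlinarith
    have : 0 < -Real.cos (π/t) + c := by linarith
    positivity
  have hxmem : ∀ k, k < t → xx k ∈ Set.Icc (0:ℝ) α := by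
    intro k hk
    constructor
    · rcases eq_or_lt_of_le (show k ≤ t-1 by omega) with rfl | hlt
      · exact hxt1pos.le
      · exact (hxt1pos.trans (hxanti k (t-1) hlt (by omega))).le
    · rcases Nat.eq_zero_or_pos k with rfl | hk0
      · exact hxx0.le
      · rw [← hxx0]
        exact (hxanti 0 k hk0 (by omega)).le
  set hp : Polynomial ℝ := Polynomial.C (g.eval β) * f - Polynomial.C (F β) * g with hhp
  have hpdeg : hp.natDegree ≤ t := by
    rw [hhp]
    refine le_trans (Polynomial.natDegree_sub_le _ _) (max_le ?_ ?_)
    · exact le_trans (Polynomial.natDegree_C_mul_le _ _) hdeg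
    · exact le_trans (Polynomial.natDegree_C_mul_le _ _) hgdeg
  have hpeval : ∀ x, hp.eval x = g.eval β * F x - F β * g.eval x := by
    intro x
    rw [hhp]
    simp [hfeval]
  have habs : ∀ k, k < t → F β * |g.eval (xx k)| < g.eval β * F α := by
    intro k hk
    calc F β * |g.eval (xx k)| ≤ F β * Sg :=
          mul_le_mul_of_nonneg_left (hSgb _ (hxmem k hk)) hFβpos.le
      _ < F α * Ig := by linarith [hkeyineq]
      _ ≤ F α * g.eval β := mul_le_mul_of_nonneg_left hIgβ hFαpos.le
      _ = g.eval β * F α := mul_comm _ _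
  have hsq : ∀ k : ℕ, ((-1:ℝ)^k)^2 = 1 := by
    intro k
    rw [← pow_mul, mul_comm, pow_mul]
    simp
  have habs2 : ∀ k : ℕ, |g.eval (xx k) * (-1:ℝ)^k| = |g.eval (xx k)| := by
    intro k
    rw [abs_mul, abs_pow, abs_neg, abs_one, one_pow, mul_one]
  have hsign : ∀ k, k < t → 0 < hp.eval (xx k) * (-1:ℝ)^k := by
    intro k hk
    have h1 := habs k hk
    have he : hp.eval (xx k) * (-1:ℝ)^k
        = g.eval β * F α - F β * (g.eval (xx k) * (-1:ℝ)^k) := by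
      rw [hpeval, hFxx]
      linear_combination (g.eval β * F α) * hsq k
    rw [he]
    have h3 : g.eval (xx k) * (-1:ℝ)^k ≤ |g.eval (xx k)| := by
      rw [← habs2 k]; exact le_abs_self _
    nlinarith [hFβpos]
  have hz : ∀ k, k + 1 < t → ∃ zz ∈ Set.Ioo (xx (k+1)) (xx k), hp.eval zz = 0 := by
    intro k hk
    apply ivt_root hp _ _ (hxanti k (k+1) (lt_add_one k) (by omega))
    have h1 := hsign k (by omega)
    have h2 := hsign (k+1) hk
    have h3 : ((-1:ℝ))^(k+1) = -(-1)^k := by ring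
    rw [h3] at h2
    nlinarith [hsq k]
  choose! z hzmem hzval using hz
  set v : ℕ → ℝ := fun j => if j = 0 then 0 else if j = t then β else z (t-1-j) with hv
  have hvb : ∀ j, j < t → xx (t-j) < v j ∧ v j < xx (t-1-j) := by
    intro j hj
    by_cases hj0 : j = 0
    · subst hj0
      have hv0 : v 0 = 0 := by simp [hv]
      rw [hv0]
      constructor
      · simpa using hxtneg
      · simpa using hxt1pos
    · have hjt : j ≠ t := by omega
      have hvj : v j = z (t-1-j) := by simp [hv, hj0, hjt]
      have hk : (t-1-j) + 1 < t := by omega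
      have hmem := hzmem _ hk
      rw [show t-1-j+1 = t-j by omega] at hmem
      rw [hvj]
      exact ⟨hmem.1, hmem.2⟩
  have hxle : ∀ m n, m ≤ n → n ≤ t → xx n ≤ xx m := by
    intro m n hmn hn
    rcases eq_or_lt_of_le hmn with rfl | hlt
    · exact le_refl _
    · exact (hxanti m n hlt hn).le
  have hvt : v t = β := by
    rw [hv]
    simp only
    rw [if_neg (by omega : t ≠ 0)]
    simp
  have hvmono : ∀ i j, i < j → j ≤ t → v i < v j := by
    intro i j hij hjt
    have hi : i < t := by omega
    obtain ⟨_, hi2⟩ := hvb i hi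
    rcases eq_or_lt_of_le hjt with heq | hjlt
    · rw [heq, hvt]
      have hle : xx (t-1-i) ≤ xx 0 := hxle 0 (t-1-i) (by omega) (by omega)
      rw [hxx0] at hle
      linarith
    · obtain ⟨hj1, _⟩ := hvb j hjlt
      have hle : xx (t-1-i) ≤ xx (t-j) := hxle (t-j) (t-1-i) (by omega) (by omega)
      linarith
  have hvroot : ∀ j, j ≤ t → hp.eval (v j) = 0 := by
    intro j hjt
    by_cases hj0 : j = 0
    · subst hj0
      have hv0 : v 0 = 0 := by simp [hv]
      rw [hv0, hpeval, hF0, hg0]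
      ring
    · by_cases hjt' : j = t
      · subst hjt'
        rw [hvt, hpeval]
        ring
      · have hvj : v j = z (t-1-j) := by simp [hv, hj0, hjt']
        have hk : (t-1-j) + 1 < t := by omega
        rw [hvj]
        exact hzval _ hk
  have hpne : hp ≠ 0 := by
    intro h0
    have h1 := hsign 0 (by omega)
    rw [h0] at h1
    simp at h1
  have hinj : Set.InjOn v (Finset.range (t+1)) := by
    intro i hi j hj hij
    simp only [Finset.coe_range, Set.mem_Iio] at hi hj
    rcases lt_trichotomy i j with h | h | h
    · exact absurd hij (ne_of_lt (hvmono i j h (by omega)))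
    · exact h
    · exact absurd hij.symm (ne_of_lt (hvmono j i h (by omega)))
  have hcard : t + 1 ≤ hp.natDegree := by
    calc t+1 = ((Finset.range (t+1)).image v).card := by
          rw [Finset.card_image_of_injOn hinj, Finset.card_range]
      _ ≤ hp.roots.toFinset.card := by
          apply Finset.card_le_card
          intro y hy
          rw [Finset.mem_image] at hy
          obtain ⟨j, hj, rfl⟩ := hy
          rw [Finset.mem_range] at hj
          rw [Multiset.mem_toFinset, Polynomial.mem_roots']
          exact ⟨hpne, hvroot j (by omega)⟩
      _ ≤ Multiset.card hp.roots := Multiset.toFinset_card_le _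
      _ ≤ hp.natDegree := Polynomial.card_roots' hp
  omega
end

section
/- If f⋆ ∈ 𝒫_t' is a minimizer of the ratio objective R over 𝒫_t', then f⋆ has no roots in the interval [α, 1]; that is, f⋆(λ) ≠ 0 for every λ ∈ [α, 1]. -/
set_option maxHeartbeats 1000000 in
theorem minimizer_no_roots_in_Icc (t : ℕ) (ht : 1 ≤ t) (α β : ℝ)
    (h0α : 0 < α) (hαβ : α < β) (hβ1 : β < 1)
    (f : Polynomial ℝ) (hdeg : f.natDegree ≤ t) (h0 : f.eval 0 = 0) (h1 : f.eval 1 = 1)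
    (hmin : 0 < sInf ((fun x => |f.eval x|) '' Set.Icc β 1))
    (hopt : ∀ g : Polynomial ℝ, g.natDegree ≤ t → g.eval 0 = 0 → g.eval 1 = 1 →
      0 < sInf ((fun x => |g.eval x|) '' Set.Icc β 1) →
      ratioObjective α β f ≤ ratioObjective α β g) :
    ∀ x ∈ Set.Icc α 1, f.eval x ≠ 0 := by
  have hbddD : BddBelow ((fun y => |f.eval y|) '' Set.Icc β 1) :=
    ⟨0, by rintro _ ⟨z, _, rfl⟩; exact abs_nonneg _⟩
  rintro x ⟨hαx, hx1⟩ hfx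
  by_cases hxβ : β ≤ x
  · -- a root in [β,1] would make the infimum 0
    have hmem : (0:ℝ) ∈ (fun y => |f.eval y|) '' Set.Icc β 1 :=
      ⟨x, ⟨hxβ, hx1⟩, by simp [hfx]⟩
    have := csInf_le hbddD hmem
    linarith
  push_neg at hxβ
  -- so x ∈ [α, β)
  have hx0 : 0 < x := lt_of_lt_of_le h0α hαx
  have hxlt1 : x < 1 := lt_trans hxβ hβ1
  obtain ⟨h, hfh⟩ := Polynomial.dvd_iff_isRoot.mpr hfx
  have hne : h ≠ 0 := by
    intro h0'
    rw [h0', mul_zero] at hfh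
    rw [hfh] at h1
    simp at h1
  have hXC : (Polynomial.X - Polynomial.C x) ≠ 0 := Polynomial.X_sub_C_ne_zero x
  have hdegf : f.natDegree = 1 + h.natDegree := by
    rw [hfh, Polynomial.natDegree_mul hXC hne, Polynomial.natDegree_X_sub_C]
  have hevf : ∀ y : ℝ, f.eval y = (y - x) * h.eval y := by
    intro y; rw [hfh]; simp
  have hh0 : h.eval 0 = 0 := by
    have h0' := h0
    rw [hevf 0] at h0'
    rcases mul_eq_zero.mp h0' with h' | h'
    · exfalso; simp at h'; linarith
    · exact h'
  have hcf : Continuous fun y : ℝ => |f.eval y| := f.continuous.abs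
  have hch : Continuous fun y : ℝ => |h.eval y| := h.continuous.abs
  set N := sSup ((fun y => |f.eval y|) '' Set.Icc 0 α) with hN
  set D := sInf ((fun y => |f.eval y|) '' Set.Icc β 1) with hD
  set H := sSup ((fun y => |h.eval y|) '' Set.Icc 0 α) with hH
  have hIccne : (Set.Icc (0:ℝ) α).Nonempty := Set.nonempty_Icc.mpr h0α.le
  have hbddf : BddAbove ((fun y => |f.eval y|) '' Set.Icc 0 α) :=
    isCompact_Icc.bddAbove_image hcf.continuousOn
  have hbddh : BddAbove ((fun y => |h.eval y|) '' Set.Icc 0 α) :=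
    isCompact_Icc.bddAbove_image hch.continuousOn
  have hfleN : ∀ y ∈ Set.Icc (0:ℝ) α, |f.eval y| ≤ N := fun y hy => le_csSup hbddf ⟨y, hy, rfl⟩
  have hhleH : ∀ y ∈ Set.Icc (0:ℝ) α, |h.eval y| ≤ H := fun y hy => le_csSup hbddh ⟨y, hy, rfl⟩
  have hHnn : 0 ≤ H := le_trans (abs_nonneg _) (hhleH 0 (Set.left_mem_Icc.mpr h0α.le))
  have hNpos : 0 < N := by
    have hfne : f ≠ 0 := by
      intro h'
      rw [h'] at h1
      simp at h1
    have hroots : {y : ℝ | f.IsRoot y}.Finite := Polynomial.finite_setOf_isRoot hfne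
    have hinf : (Set.Icc (0:ℝ) α).Infinite := Set.Icc_infinite h0α
    obtain ⟨y, hy⟩ := (hinf.diff hroots).nonempty
    have hy2 : f.eval y ≠ 0 := hy.2
    exact lt_of_lt_of_le (abs_pos.mpr hy2) (hfleN y hy.1)
  obtain ⟨ε, hεpos, hε1, hεH⟩ : ∃ ε : ℝ, 0 < ε ∧ ε ≤ 1 ∧ ε * (H + 1) ≤ N / 2 := by
    refine ⟨min 1 (N / (2 * (H + 1))), lt_min one_pos (div_pos hNpos (by linarith)),
      min_le_left _ _, ?_⟩
    calc min 1 (N / (2 * (H + 1))) * (H + 1) ≤ (N / (2 * (H + 1))) * (H + 1) :=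
          mul_le_mul_of_nonneg_right (min_le_right _ _) (by linarith)
      _ = N / 2 := by field_simp
  set δ := ε * (N / 2) with hδ
  have hδpos : 0 < δ := mul_pos hεpos (by linarith)
  have hδle : δ ≤ N / 2 := by
    calc δ = ε * (N / 2) := rfl
      _ ≤ 1 * (N / 2) := mul_le_mul_of_nonneg_right hε1 (by linarith)
      _ = N / 2 := one_mul _
  -- the perturbed polynomial
  set p : Polynomial ℝ := Polynomial.C (1 - ε) * Polynomial.X + Polynomial.C (ε - x) with hp
  set g := p * h with hg
  have hevp : ∀ y : ℝ, p.eval y = (y - x) + ε * (1 - y) := by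
    intro y; simp [hp]; ring
  have hevg : ∀ y : ℝ, g.eval y = ((y - x) + ε * (1 - y)) * h.eval y := by
    intro y; rw [hg, Polynomial.eval_mul, hevp]
  have hdegp : p.natDegree ≤ 1 := Polynomial.natDegree_linear_le
  have hdegg : g.natDegree ≤ t := by
    calc g.natDegree ≤ p.natDegree + h.natDegree := Polynomial.natDegree_mul_le
      _ ≤ 1 + h.natDegree := by omega
      _ = f.natDegree := hdegf.symm
      _ ≤ t := hdeg
  have hg0 : g.eval 0 = 0 := by rw [hevg, hh0]; ring
  have hg1 : g.eval 1 = 1 := by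
    have hev1 := hevf 1
    rw [h1] at hev1
    rw [hevg]
    linear_combination -hev1
  -- numerator bound : strict decrease
  have hnum : ∀ y ∈ Set.Icc (0:ℝ) α, |g.eval y| ≤ N - δ := by
    rintro y ⟨hy0, hyα⟩
    have hyx : y ≤ x := le_trans hyα hαx
    have hy1 : y ≤ 1 := by linarith
    have hhy : |h.eval y| ≤ H := hhleH y ⟨hy0, hyα⟩
    have hhynn : (0:ℝ) ≤ |h.eval y| := abs_nonneg _
    have hbnn : 0 ≤ ε * (1 - y) := mul_nonneg hεpos.le (by linarith)
    have hfy : (x - y) * |h.eval y| ≤ N := by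
      have hle := hfleN y ⟨hy0, hyα⟩
      rw [hevf y, abs_mul, abs_of_nonpos (by linarith : y - x ≤ 0), neg_sub] at hle
      exact hle
    rw [hevg, abs_mul]
    rcases le_total (ε * (1 - y)) (x - y) with hc | hc
    · have habs : |(y - x) + ε * (1 - y)| = (x - y) - ε * (1 - y) := by
        rw [abs_of_nonpos (by linarith)]; ring
      rw [habs]
      rcases le_total (N / 2) ((x - y) * |h.eval y|) with hhi | hlo
      · have h1y : (x - y) * |h.eval y| ≤ (1 - y) * |h.eval y| :=
          mul_le_mul_of_nonneg_right (by linarith) hhynn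
        have e1 : ε * ((x - y) * |h.eval y|) ≤ ε * ((1 - y) * |h.eval y|) :=
          mul_le_mul_of_nonneg_left h1y hεpos.le
        have e2 : ε * (N / 2) ≤ ε * ((x - y) * |h.eval y|) :=
          mul_le_mul_of_nonneg_left hhi hεpos.le
        nlinarith
      · nlinarith [mul_nonneg hbnn hhynn]
    · have habs : |(y - x) + ε * (1 - y)| ≤ ε * (1 - y) := by
        rw [abs_le]; constructor <;> linarith
      have h2 : |(y - x) + ε * (1 - y)| * |h.eval y| ≤ ε * (1 - y) * |h.eval y| :=
        mul_le_mul_of_nonneg_right habs hhynn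
      have h3 : (1 - y) * |h.eval y| ≤ H + 1 := by nlinarith
      have h4 : ε * ((1 - y) * |h.eval y|) ≤ ε * (H + 1) :=
        mul_le_mul_of_nonneg_left h3 hεpos.le
      nlinarith
  -- denominator bound : no decrease
  have hden : ∀ y ∈ Set.Icc β 1, D ≤ |g.eval y| := by
    rintro y ⟨hyβ, hy1⟩
    have hfD : D ≤ |f.eval y| := csInf_le hbddD ⟨y, ⟨hyβ, hy1⟩, rfl⟩
    have hxy : x < y := lt_of_lt_of_le hxβ hyβ
    have hb : 0 ≤ ε * (1 - y) := mul_nonneg hεpos.le (by linarith)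
    have hle : |f.eval y| ≤ |g.eval y| := by
      rw [hevf, hevg, abs_mul, abs_mul]
      refine mul_le_mul_of_nonneg_right ?_ (abs_nonneg _)
      rw [abs_of_nonneg (by linarith : (0:ℝ) ≤ y - x), abs_of_nonneg (by linarith)]
      linarith
    linarith
  have hβne : (Set.Icc β 1).Nonempty := Set.nonempty_Icc.mpr (by linarith)
  have hginf : D ≤ sInf ((fun y => |g.eval y|) '' Set.Icc β 1) := by
    apply le_csInf (hβne.image _)
    rintro _ ⟨z, hz, rfl⟩; exact hden z hz
  have hgmin : 0 < sInf ((fun y => |g.eval y|) '' Set.Icc β 1) := lt_of_lt_of_le hmin hginf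
  have hgsup : sSup ((fun y => |g.eval y|) '' Set.Icc 0 α) ≤ N - δ := by
    apply csSup_le (hIccne.image _)
    rintro _ ⟨z, hz, rfl⟩; exact hnum z hz
  have hRg : ratioObjective α β g ≤ (N - δ) / D := by
    unfold ratioObjective
    exact div_le_div₀ (by linarith) hgsup hmin hginf
  have hRf : ratioObjective α β f = N / D := rfl
  have hlt : (N - δ) / D < N / D :=
    (div_lt_div_iff_of_pos_right hmin).mpr (by linarith)
  have hle := hopt g hdegg hg0 hg1 hgmin
  rw [hRf] at hle
  linarith
end

section
/- Let t ≥ 1 be an integer, let 0 < α < β < 1 be real numbers, and let g be a real polynomial of degree at most t−1 that is not identically zero and has no roots in [β,1]. Define f(λ) := (λ − α)·g(λ). Then there exists δ ∈ (0, α) such that the polynomial h(λ) := (λ − (α − δ))·g(λ) satisfies (max_{λ∈[0,α]} |h(λ)|) / (min_{λ∈[β,1]} |h(λ)|) < (max_{λ∈[0,α]} |f(λ)|) / (min_{λ∈[β,1]} |f(λ)|). -/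
open Polynomial Set

theorem perturb_root_at_alpha_decreases_ratio (t : ℕ) (ht : 1 ≤ t) (α β : ℝ)
    (h0α : 0 < α) (hαβ : α < β) (hβ1 : β < 1)
    (g : Polynomial ℝ) (hgdeg : g.natDegree ≤ t - 1) (hg : g ≠ 0)
    (hgroots : ∀ x ∈ Set.Icc β 1, g.eval x ≠ 0)
    (f : Polynomial ℝ)
    (hfdef : f = (Polynomial.X - Polynomial.C α) * g) :
    ∃ δ ∈ Set.Ioo (0 : ℝ) α,
      ∀ h : Polynomial ℝ, h = (Polynomial.X - Polynomial.C (α - δ)) * g →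
        sSup ((fun x => |h.eval x|) '' Set.Icc 0 α) /
            sInf ((fun x => |h.eval x|) '' Set.Icc β 1) <
        sSup ((fun x => |f.eval x|) '' Set.Icc 0 α) /
            sInf ((fun x => |f.eval x|) '' Set.Icc β 1) := by
  have hc1 : IsCompact (Icc (0:ℝ) α) := isCompact_Icc
  have hc2 : IsCompact (Icc β (1:ℝ)) := isCompact_Icc
  have hne1 : (Icc (0:ℝ) α).Nonempty := nonempty_Icc.2 h0α.le
  have hne2 : (Icc β (1:ℝ)).Nonempty := nonempty_Icc.2 hβ1.le
  have hcontf : ∀ p : Polynomial ℝ, Continuous (fun x : ℝ => |p.eval x|) := fun p =>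
    (p.continuous_aeval).abs
  -- abbreviations
  set Mf := sSup ((fun x => |f.eval x|) '' Icc 0 α) with hMf
  set mf := sInf ((fun x => |f.eval x|) '' Icc β 1) with hmf
  set G := sSup ((fun x => |g.eval x|) '' Icc 0 α) with hG
  -- bounds
  have hbddf : BddAbove ((fun x => |f.eval x|) '' Icc 0 α) :=
    (hc1.image (hcontf f)).bddAbove
  have hbddg : BddAbove ((fun x => |g.eval x|) '' Icc 0 α) :=
    (hc1.image (hcontf g)).bddAbove
  have hbddbelow : BddBelow ((fun x => |f.eval x|) '' Icc β 1) :=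
    (hc2.image (hcontf f)).bddBelow
  -- Mf > 0
  have hfne : f ≠ 0 := by
    rw [hfdef]; exact mul_ne_zero (X_sub_C_ne_zero α) hg
  have hMfpos : 0 < Mf := by
    obtain ⟨x, hx, hxr⟩ : ∃ x ∈ Icc (0:ℝ) α, ¬ f.IsRoot x := by
      by_contra hcon
      push_neg at hcon
      exact ((Polynomial.finite_setOf_isRoot hfne).subset (fun x hx => hcon x hx)).not_infinite
        (Set.Icc_infinite h0α) |>.elim
    have h1 : 0 < |f.eval x| := abs_pos.2 hxr
    have h2 : |f.eval x| ≤ Mf := le_csSup hbddf ⟨x, hx, rfl⟩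
    linarith
  have hGpos : 0 < G := by
    obtain ⟨x, hx, hxr⟩ : ∃ x ∈ Icc (0:ℝ) α, ¬ g.IsRoot x := by
      by_contra hcon
      push_neg at hcon
      exact ((Polynomial.finite_setOf_isRoot hg).subset (fun x hx => hcon x hx)).not_infinite
        (Set.Icc_infinite h0α) |>.elim
    have h1 : 0 < |g.eval x| := abs_pos.2 hxr
    have h2 : |g.eval x| ≤ G := le_csSup hbddg ⟨x, hx, rfl⟩
    linarith
  -- mf > 0
  have hmfpos : 0 < mf := by
    obtain ⟨x, hx, hxe⟩ := hc2.exists_sInf_image_eq hne2 ((hcontf f).continuousOn)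
    rw [hmf, hxe, hfdef]
    simp only [eval_mul, eval_sub, eval_X, eval_C, abs_mul]
    have : α < x := lt_of_lt_of_le hαβ hx.1
    exact mul_pos (abs_pos.2 (by linarith)) (abs_pos.2 (hgroots x hx))
  -- choose δ
  refine ⟨min (α/2) (Mf/G), ⟨lt_min (by linarith) (div_pos hMfpos hGpos),
    lt_of_le_of_lt (min_le_left _ _) (by linarith)⟩, ?_⟩
  set δ := min (α/2) (Mf/G) with hδ
  have hδpos : 0 < δ := lt_min (by linarith) (div_pos hMfpos hGpos)
  have hδG : δ * G ≤ Mf := by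
    rw [← le_div_iff₀ hGpos]; exact min_le_right _ _
  intro h hh
  set Mh := sSup ((fun x => |h.eval x|) '' Icc 0 α) with hMh
  set mh := sInf ((fun x => |h.eval x|) '' Icc β 1) with hmh
  -- Mh ≤ Mf
  have hMhle : Mh ≤ Mf := by
    apply csSup_le (hne1.image _)
    rintro y ⟨x, hx, rfl⟩
    simp only [hh, eval_mul, eval_sub, eval_X, eval_C, abs_mul]
    rcases le_or_gt x (α - δ) with hcase | hcase
    · have h1 : |x - (α - δ)| ≤ |x - α| := by
        rw [abs_sub_comm, abs_sub_comm x α, abs_of_nonneg (by linarith),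
          abs_of_nonneg (by linarith : 0 ≤ α - x)]
        linarith
      calc |x - (α - δ)| * |g.eval x| ≤ |x - α| * |g.eval x| :=
            mul_le_mul_of_nonneg_right h1 (abs_nonneg _)
        _ ≤ Mf := by
            have h2 : |f.eval x| ≤ Mf := le_csSup hbddf ⟨x, hx, rfl⟩
            have heq : |f.eval x| = |x - α| * |g.eval x| := by
              rw [hfdef]; simp [abs_mul]
            rwa [heq] at h2
    · have h1 : |x - (α - δ)| ≤ δ := by
        rw [abs_of_nonneg (by linarith)]; linarith [hx.2]
      calc |x - (α - δ)| * |g.eval x| ≤ δ * |g.eval x| :=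
            mul_le_mul_of_nonneg_right h1 (abs_nonneg _)
        _ ≤ δ * G := by
            apply mul_le_mul_of_nonneg_left _ hδpos.le
            exact le_csSup hbddg ⟨x, hx, rfl⟩
        _ ≤ Mf := hδG
  -- mh > mf
  have hmhgt : mf < mh := by
    obtain ⟨x, hx, hxe⟩ := hc2.exists_sInf_image_eq hne2 ((hcontf h).continuousOn)
    rw [hmh, hxe]
    have hαx : α < x := lt_of_lt_of_le hαβ hx.1
    have hgx : 0 < |g.eval x| := abs_pos.2 (hgroots x hx)
    have hfx : mf ≤ |f.eval x| := csInf_le hbddbelow ⟨x, hx, rfl⟩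
    have : |f.eval x| < |h.eval x| := by
      rw [hfdef, hh]
      simp only [eval_mul, eval_sub, eval_X, eval_C, abs_mul]
      apply mul_lt_mul_of_pos_right _ hgx
      rw [abs_of_nonneg (by linarith), abs_of_nonneg (by linarith)]
      linarith
    linarith
  -- conclude
  have hmhpos : 0 < mh := lt_trans hmfpos hmhgt
  calc Mh / mh ≤ Mf / mh := (div_le_div_iff_of_pos_right hmhpos).2 hMhle
    _ < Mf / mf := div_lt_div_of_pos_left hMfpos hmfpos hmhgt
end

section
/- If f⋆ ∈ 𝒫_t' is a minimizer of the ratio objective R over 𝒫_t', then f⋆ is t-equioscillatory on the interval [0, α]. -/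
/-- A polynomial `f` is `t`-equioscillatory on `[a, b]` if there exist points
`a ≤ γ₀ < γ₁ < ⋯ < γ_{t-1} ≤ b` at which `|f|` attains its maximum over `[a, b]`
and at which the values of `f` alternate in sign. -/
def Equioscillatory (f : Polynomial ℝ) (t : ℕ) (a b : ℝ) : Prop :=
  ∃ γ : ℕ → ℝ,
    (∀ s, s + 1 < t → γ s < γ (s + 1)) ∧
    (∀ s < t, γ s ∈ Set.Icc a b) ∧
    (∀ s < t, |f.eval (γ s)| = sSup ((fun x => |f.eval x|) '' Set.Icc a b)) ∧
    (∀ s, s + 1 < t → f.eval (γ (s + 1)) = - f.eval (γ s))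

open Polynomial Set

lemma aux_bound1 (F qv MK Q δ ε : ℝ) (h1 : |F| ≤ MK) (h2 : |qv| ≤ Q) (hε : 0 < ε)
    (hεQ : ε*Q ≤ δ/2) : |F + ε*qv| ≤ MK + δ/2 := by
  have := abs_add_le F (ε*qv)
  rw [abs_mul, abs_of_pos hε] at this
  nlinarith [abs_nonneg qv]

lemma aux_bound2 (F qv M Q c ε η : ℝ) (h1 : |F| ≤ M) (h2 : |qv| ≤ Q) (hε : 0 < ε)
    (hεQ2 : ε*Q^2 ≤ -c/4) (hcase : F*qv ≤ c/2) (hη : η = ε*(-c)*(3/4)) :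
    (F + ε*qv)^2 ≤ M^2 - η := by
  have e1 : F^2 ≤ M^2 := by rw [← sq_abs F]; nlinarith [abs_nonneg F]
  have e2 : qv^2 ≤ Q^2 := by rw [← sq_abs qv]; nlinarith [abs_nonneg qv]
  have e3 : ε^2 * qv^2 ≤ ε * (-c/4) := by nlinarith
  nlinarith

lemma aux_mul_abs (d v w : ℝ) (hd : 0 < d) (h : |v| ≤ w) : |d⁻¹ * v| ≤ d⁻¹ * w := by
  rw [abs_mul, abs_inv, abs_of_pos hd]
  have : 0 < d⁻¹ := by positivity
  nlinarith

lemma aux_mul_abs' (d v w : ℝ) (hd : 0 < d) (h : w ≤ v) (hw : 0 ≤ w) : d⁻¹ * w ≤ |d⁻¹ * v| := by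
  rw [abs_mul, abs_inv, abs_of_pos hd]
  have h2 : w ≤ |v| := le_trans h (le_abs_self v)
  have : 0 < d⁻¹ := by positivity
  nlinarith

lemma perturb_better (t : ℕ) (α β : ℝ) (h0α : 0 < α) (hαβ : α < β) (hβ1 : β < 1)
    (f : Polynomial ℝ) (h1 : f.eval 1 = 1)
    (hmin : 0 < sInf ((fun x => |f.eval x|) '' Set.Icc β 1))
    (q : Polynomial ℝ) (hqdeg : q.natDegree ≤ t) (hq0 : q.eval 0 = 0)
    (hdeg : f.natDegree ≤ t) (h0 : f.eval 0 = 0)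
    (hqE : ∀ x ∈ Set.Icc 0 α, |f.eval x| = sSup ((fun y => |f.eval y|) '' Set.Icc 0 α) →
        f.eval x * q.eval x < 0)
    (hqβ : ∀ x ∈ Set.Icc β 1, 0 ≤ q.eval x) :
    ∃ g : Polynomial ℝ, g.natDegree ≤ t ∧ g.eval 0 = 0 ∧ g.eval 1 = 1 ∧
      0 < sInf ((fun x => |g.eval x|) '' Set.Icc β 1) ∧
      ratioObjective α β g < ratioObjective α β f := by
  have hα01 : (0:ℝ) ≤ α := h0α.le
  have hβ01 : β ≤ 1 := hβ1.le
  have hIccA : (Icc (0:ℝ) α).Nonempty := ⟨0, le_refl _, hα01⟩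
  have hIccB : (Icc β (1:ℝ)).Nonempty := ⟨β, le_refl _, hβ01⟩
  have contF : Continuous fun x : ℝ => |f.eval x| := f.continuous.abs
  have contQ : Continuous fun x : ℝ => |q.eval x| := q.continuous.abs
  set M := sSup ((fun y => |f.eval y|) '' Icc (0:ℝ) α) with hM
  set m := sInf ((fun x => |f.eval x|) '' Icc β (1:ℝ)) with hm
  have bddA : BddAbove ((fun y => |f.eval y|) '' Icc (0:ℝ) α) :=
    (isCompact_Icc.image_of_continuousOn contF.continuousOn).bddAbove
  have hleM : ∀ x ∈ Icc (0:ℝ) α, |f.eval x| ≤ M := fun x hx =>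
    le_csSup bddA ⟨x, hx, rfl⟩
  -- M > 0
  have hfne : f ≠ 0 := fun h => by simp [h] at h1
  have hMpos : 0 < M := by
    by_contra hc
    push_neg at hc
    have hroots : (Icc (0:ℝ) α) ⊆ {x | f.IsRoot x} := by
      intro x hx
      have := hleM x hx
      have : |f.eval x| ≤ 0 := this.trans hc
      have : f.eval x = 0 := abs_nonpos_iff.mp this
      exact this
    have : ({x | f.IsRoot x} : Set ℝ).Infinite :=
      (Set.Icc_infinite h0α).mono hroots
    exact hfne (f.eq_zero_of_infinite_isRoot this)
  have hfm : ∀ x ∈ Icc β (1:ℝ), m ≤ |f.eval x| := by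
    intro x hx
    rw [hm]
    exact csInf_le ⟨0, fun y ⟨z, _, hz⟩ => hz ▸ abs_nonneg _⟩ ⟨x, hx, rfl⟩
  clear_value M m
  -- the extremal set
  set E := Icc (0:ℝ) α ∩ {x | |f.eval x| = M} with hE
  have hEclosed : IsClosed E := isClosed_Icc.inter (isClosed_eq contF continuous_const)
  have hEcompact : IsCompact E := isCompact_Icc.inter_right (isClosed_eq contF continuous_const)
  have hEne : E.Nonempty := by
    obtain ⟨x, hx, hxv⟩ := isCompact_Icc.exists_sSup_image_eq hIccA contF.continuousOn
    exact ⟨x, hx, by rw [hM]; exact hxv.symm⟩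
  have contfq : Continuous fun x : ℝ => f.eval x * q.eval x := f.continuous.mul q.continuous
  set c := sSup ((fun x => f.eval x * q.eval x) '' E) with hc
  have hcneg : c < 0 := by
    obtain ⟨x, hx, hxv⟩ := hEcompact.exists_sSup_image_eq hEne contfq.continuousOn
    rw [← hc] at hxv
    rw [hxv]
    exact hqE x hx.1 hx.2
  have hfqle : ∀ x ∈ E, f.eval x * q.eval x ≤ c :=
    fun x hx => le_csSup (hEcompact.image_of_continuousOn contfq.continuousOn).bddAbove ⟨x, hx, rfl⟩
  -- the "good" compact set where fq is not very negative
  set K := Icc (0:ℝ) α ∩ {x | c/2 ≤ f.eval x * q.eval x} with hK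
  have hKcompact : IsCompact K := isCompact_Icc.inter_right (isClosed_le continuous_const contfq)
  have hKne : K.Nonempty := ⟨0, ⟨le_refl _, hα01⟩, by simp [h0]; linarith⟩
  set MK := sSup ((fun y => |f.eval y|) '' K) with hMK
  have hMKlt : MK < M := by
    obtain ⟨x, hx, hxv⟩ := hKcompact.exists_sSup_image_eq hKne contF.continuousOn
    rw [← hMK] at hxv
    rw [hxv]
    rcases lt_or_eq_of_le (hleM x hx.1) with h | h
    · exact h
    · exfalso
      have hxE : x ∈ E := ⟨hx.1, h⟩
      have := hfqle x hxE
      have := hx.2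
      simp only [mem_setOf_eq] at this
      linarith
  have hKle : ∀ x ∈ K, |f.eval x| ≤ MK := fun x hx =>
    le_csSup (hKcompact.image_of_continuousOn contF.continuousOn).bddAbove ⟨x, hx, rfl⟩
  have hKle' : ∀ x ∈ Icc (0:ℝ) α, c/2 ≤ f.eval x * q.eval x → |f.eval x| ≤ MK :=
    fun x hx h => hKle x ⟨hx, h⟩
  clear_value E K c MK
  set δ := M - MK with hδ
  have hδpos : 0 < δ := by simp [hδ]; linarith
  clear_value δ
  set Q := sSup ((fun y => |q.eval y|) '' Icc (0:ℝ) α) with hQ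
  have hQle : ∀ x ∈ Icc (0:ℝ) α, |q.eval x| ≤ Q := fun x hx =>
    le_csSup (isCompact_Icc.image_of_continuousOn contQ.continuousOn).bddAbove ⟨x, hx, rfl⟩
  have hQ0 : 0 ≤ Q := le_trans (abs_nonneg _) (hQle 0 ⟨le_refl _, hα01⟩)
  clear_value Q
  -- lower bound on f on [β,1]
  have hmpos : 0 < m := hmin
  have hfpos : ∀ x ∈ Icc β (1:ℝ), m ≤ f.eval x := by
    intro x hx
    by_contra hcon
    push_neg at hcon
    have hfx : f.eval x ≤ 0 := by
      by_contra hp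
      push_neg at hp
      have : |f.eval x| = f.eval x := abs_of_pos hp
      have := hfm x hx
      linarith [abs_of_pos hp ▸ this]
    obtain ⟨z, hz, hz0⟩ := intermediate_value_Icc hx.2 f.continuous.continuousOn
      (show (0:ℝ) ∈ Icc (f.eval x) (f.eval 1) by rw [h1]; exact ⟨hfx, zero_le_one⟩)
    have hzB : z ∈ Icc β 1 := ⟨le_trans hx.1 hz.1, hz.2⟩
    have hz0' : f.eval z = 0 := hz0
    have := hfm z hzB
    rw [hz0'] at this
    simp at this
    linarith
  -- choose ε
  set ε := min (δ / (2*(Q+1))) ((-c) / (4*(Q^2+1))) with hε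
  have hεpos : 0 < ε := by
    apply lt_min
    · positivity
    · have : 0 < -c := by linarith
      positivity
  have hεQ : ε * Q ≤ δ/2 := by
    have h1' : ε ≤ δ / (2*(Q+1)) := min_le_left _ _
    have h2' : ε * (2*(Q+1)) ≤ δ := (le_div_iff₀ (by positivity)).mp h1'
    nlinarith
  have hεQ2 : ε * Q^2 ≤ -c/4 := by
    have h1' : ε ≤ (-c) / (4*(Q^2+1)) := min_le_right _ _
    have h2' : ε * (4*(Q^2+1)) ≤ -c := (le_div_iff₀ (by positivity)).mp h1'
    nlinarith
  clear_value ε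
  set η := ε * (-c) * (3/4) with hη
  have hηpos : 0 < η := by
    have : 0 < -c := by linarith
    positivity
  clear_value η
  set ρ := max (M - δ/2) (Real.sqrt (M^2 - η)) with hρ
  have hρM : ρ < M := by
    apply max_lt
    · linarith
    · rw [Real.sqrt_lt' hMpos]
      linarith
  have hρ0 : 0 ≤ ρ := le_trans (Real.sqrt_nonneg _) (le_max_right _ _)
  -- key pointwise bound on [0, α]
  have hbound : ∀ x ∈ Icc (0:ℝ) α, |f.eval x + ε * q.eval x| ≤ ρ := by
    intro x hx
    by_cases hcase : c/2 ≤ f.eval x * q.eval x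
    · -- x ∈ K
      have h1' : |f.eval x| ≤ MK := hKle' x hx hcase
      have h2' : |q.eval x| ≤ Q := hQle x hx
      calc |f.eval x + ε * q.eval x| ≤ MK + δ/2 := aux_bound1 _ _ _ _ _ _ h1' h2' hεpos hεQ
        _ = M - δ/2 := by rw [hδ]; ring
        _ ≤ ρ := le_max_left _ _
    · push_neg at hcase
      have h1' : |f.eval x| ≤ M := hleM x hx
      have h2' : |q.eval x| ≤ Q := hQle x hx
      have hsq : (f.eval x + ε * q.eval x)^2 ≤ M^2 - η :=
        aux_bound2 _ _ _ _ _ _ _ h1' h2' hεpos hεQ2 hcase.le hη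
      calc |f.eval x + ε * q.eval x| = Real.sqrt ((f.eval x + ε * q.eval x)^2) :=
            (Real.sqrt_sq_eq_abs _).symm
        _ ≤ Real.sqrt (M^2 - η) := Real.sqrt_le_sqrt hsq
        _ ≤ ρ := le_max_right _ _
  clear_value ρ
  -- lower bound on [β,1]
  have hlow : ∀ x ∈ Icc β (1:ℝ), m ≤ f.eval x + ε * q.eval x := by
    intro x hx
    have := hfpos x hx
    have := hqβ x hx
    nlinarith
  -- define g
  set p := f + C ε * q with hp
  have hpev : ∀ x, p.eval x = f.eval x + ε * q.eval x := by intro x; simp [hp]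
  set d := 1 + ε * q.eval 1 with hd
  have hq1 : 0 ≤ q.eval 1 := hqβ 1 ⟨hβ01, le_refl _⟩
  have hdpos : 0 < d := by
    rw [hd]
    exact add_pos_of_pos_of_nonneg one_pos (mul_nonneg hεpos.le hq1)
  refine ⟨C d⁻¹ * p, ?_, ?_, ?_, ?_, ?_⟩
  · calc (C d⁻¹ * p).natDegree ≤ p.natDegree := natDegree_C_mul_le _ _
      _ ≤ max f.natDegree (C ε * q).natDegree := natDegree_add_le _ _
      _ ≤ t := by
          apply max_le hdeg
          exact le_trans (natDegree_C_mul_le _ _) hqdeg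
  · simp [hpev 0, h0, hq0]
  · simp only [eval_mul, eval_C, hpev 1, h1]
    rw [← hd]
    exact inv_mul_cancel₀ hdpos.ne'
  · -- positivity of sInf for g
    apply lt_of_lt_of_le (show (0:ℝ) < d⁻¹ * m by positivity)
    apply le_csInf (hIccB.image _)
    rintro b ⟨x, hx, rfl⟩
    have h1' := hlow x hx
    have := aux_mul_abs' d _ _ hdpos h1' hmpos.le
    simpa [hpev x] using this
  · -- ratio comparison
    have hsupg : sSup ((fun x => |(C d⁻¹ * p).eval x|) '' Icc (0:ℝ) α) ≤ d⁻¹ * ρ := by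
      apply csSup_le (hIccA.image _)
      rintro b ⟨x, hx, rfl⟩
      have := aux_mul_abs d _ _ hdpos (hbound x hx)
      simpa [hpev x] using this
    have hinfg : d⁻¹ * m ≤ sInf ((fun x => |(C d⁻¹ * p).eval x|) '' Icc β (1:ℝ)) := by
      apply le_csInf (hIccB.image _)
      rintro b ⟨x, hx, rfl⟩
      have h1' := hlow x hx
      have := aux_mul_abs' d _ _ hdpos h1' hmpos.le
      simpa [hpev x] using this
    have hd' : 0 < d⁻¹ := by positivity
    have step1 : ratioObjective α β (C d⁻¹ * p) ≤ (d⁻¹ * ρ) / (d⁻¹ * m) := by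
      unfold ratioObjective
      exact div_le_div₀ (by positivity) hsupg (by positivity) hinfg
    have step2 : (d⁻¹ * ρ) / (d⁻¹ * m) = ρ / m := mul_div_mul_left ρ m hd'.ne'
    have step3 : ρ / m < M / m := (div_lt_div_iff_of_pos_right hmpos).mpr hρM
    have step4 : ratioObjective α β f = M / m := by
      unfold ratioObjective
      rw [hM, hm]
    rw [step4]
    calc ratioObjective α β (C d⁻¹ * p) ≤ ρ / m := by rw [← step2]; exact step1
      _ < M / m := step3


noncomputable def greedySeq (f : Polynomial ℝ) (E : Set ℝ) : ℕ → ℝ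
  | 0 => sInf E
  | i + 1 => sInf (E ∩ {x | greedySeq f E i ≤ x ∧
      Polynomial.eval x f = - Polynomial.eval (greedySeq f E i) f})

lemma exists_corrector (t : ℕ) (ht : 1 ≤ t) (α β : ℝ)
    (h0α : 0 < α) (hαβ : α < β) (hβ1 : β < 1)
    (f : Polynomial ℝ) (hdeg : f.natDegree ≤ t) (h0 : f.eval 0 = 0) (h1 : f.eval 1 = 1)
    (hne : ¬ (∃ γ : ℕ → ℝ,
      (∀ s, s + 1 < t → γ s < γ (s + 1)) ∧
      (∀ s < t, γ s ∈ Set.Icc 0 α) ∧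
      (∀ s < t, |f.eval (γ s)| = sSup ((fun x => |f.eval x|) '' Set.Icc 0 α)) ∧
      (∀ s, s + 1 < t → f.eval (γ (s + 1)) = - f.eval (γ s)))) :
    ∃ k : ℕ, k + 1 < t ∧ ∃ q : Polynomial ℝ, q.natDegree ≤ t ∧ q.eval 0 = 0 ∧
      (∀ x ∈ Set.Icc (0:ℝ) α, |f.eval x| = sSup ((fun y => |f.eval y|) '' Set.Icc (0:ℝ) α) →
        f.eval x * q.eval x < 0) ∧
      (∀ x ∈ Set.Icc β (1:ℝ), 0 ≤ q.eval x) := by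
  classical
  have hα01 : (0:ℝ) ≤ α := h0α.le
  have contF : Continuous fun x : ℝ => |f.eval x| := f.continuous.abs
  have hIccA : (Icc (0:ℝ) α).Nonempty := ⟨0, le_refl _, hα01⟩
  set M := sSup ((fun y => |f.eval y|) '' Icc (0:ℝ) α) with hM
  have bddA : BddAbove ((fun y => |f.eval y|) '' Icc (0:ℝ) α) :=
    (isCompact_Icc.image_of_continuousOn contF.continuousOn).bddAbove
  have hleM : ∀ x ∈ Icc (0:ℝ) α, |f.eval x| ≤ M := fun x hx => le_csSup bddA ⟨x, hx, rfl⟩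
  have hfne : f ≠ 0 := fun h => by simp [h] at h1
  have hMpos : 0 < M := by
    by_contra hc
    push_neg at hc
    have hroots : (Icc (0:ℝ) α) ⊆ {x | f.IsRoot x} := by
      intro x hx
      exact abs_nonpos_iff.mp ((hleM x hx).trans hc)
    exact hfne (f.eq_zero_of_infinite_isRoot ((Set.Icc_infinite h0α).mono hroots))
  set E := Icc (0:ℝ) α ∩ {x | |f.eval x| = M} with hE
  have hEsub : E ⊆ Icc (0:ℝ) α := inter_subset_left
  have hEclosed : IsClosed E := isClosed_Icc.inter (isClosed_eq contF continuous_const)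
  have hEne : E.Nonempty := by
    obtain ⟨x, hx, hxv⟩ := isCompact_Icc.exists_sSup_image_eq hIccA contF.continuousOn
    exact ⟨x, hx, by rw [hE] at *; exact hxv.symm⟩
  have hEbdd : BddBelow E := ⟨0, fun x hx => (hEsub hx).1⟩
  have hfne0 : ∀ x ∈ E, f.eval x ≠ 0 := by
    intro x hx h
    have : |f.eval x| = M := hx.2
    rw [h] at this
    simp at this
    rw [← this] at hMpos
    exact lt_irrefl _ hMpos
  have hEpos : ∀ x ∈ E, 0 < x := by
    intro x hx
    rcases lt_or_eq_of_le (hEsub hx).1 with h | h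
    · exact h
    · exact absurd (by rw [← h]; exact h0) (hfne0 x hx)
  set γ := greedySeq f E with hγdef
  set T : ℕ → Set ℝ := fun i => E ∩ {x | γ i ≤ x ∧ f.eval x = - f.eval (γ i)} with hT
  have hγ0 : γ 0 = sInf E := rfl
  have hγs : ∀ i, γ (i+1) = sInf (T i) := fun i => rfl
  have hTclosed : ∀ i, IsClosed (T i) := fun i =>
    hEclosed.inter ((isClosed_le continuous_const continuous_id).inter
      (isClosed_eq f.continuous continuous_const))
  have hTbdd : ∀ i, BddBelow (T i) := fun i => ⟨0, fun x hx => (hEsub hx.1).1⟩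
  have hγ0mem : γ 0 ∈ E := by rw [hγ0]; exact hEclosed.csInf_mem hEne hEbdd
  have hγ0le : ∀ x ∈ E, γ 0 ≤ x := fun x hx => by rw [hγ0]; exact csInf_le hEbdd hx
  have hTmem : ∀ i, (T i).Nonempty → γ (i+1) ∈ T i := fun i h => by
    rw [hγs i]; exact (hTclosed i).csInf_mem h (hTbdd i)
  have hTle : ∀ i, ∀ x ∈ T i, γ (i+1) ≤ x := fun i x hx => by
    rw [hγs i]; exact csInf_le (hTbdd i) hx
  by_cases hall : ∀ i, i + 1 < t → (T i).Nonempty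
  · -- equioscillation holds, contradiction
    exfalso
    apply hne
    have hmemE : ∀ s, s < t → γ s ∈ E := by
      intro s
      induction s with
      | zero => intro _; exact hγ0mem
      | succ s ih =>
        intro hs
        exact (hTmem s (hall s hs)).1
    refine ⟨γ, ?_, ?_, ?_, ?_⟩
    · intro s hs
      have hm := hTmem s (hall s hs)
      have hle : γ s ≤ γ (s+1) := hm.2.1
      rcases lt_or_eq_of_le hle with h | h
      · exact h
      · exfalso
        have := hm.2.2
        rw [← h] at this
        have hz : f.eval (γ s) = 0 := by linarith
        exact hfne0 _ (hmemE s (Nat.lt_of_succ_lt hs)) hz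
    · intro s hs; exact hEsub (hmemE s hs)
    · intro s hs; exact (hmemE s hs).2
    · intro s hs; exact (hTmem s (hall s hs)).2.2
  · push_neg at hall
    obtain ⟨i0, hi0t, hi0⟩ := hall
    have hi0' : ¬(T i0).Nonempty := by rw [hi0]; exact Set.not_nonempty_empty
    have hex : ∃ i, ¬(T i).Nonempty := ⟨i0, hi0'⟩
    set k := Nat.find hex with hkdef
    have hk : ¬(T k).Nonempty := Nat.find_spec hex
    have hkmin : ∀ j, j < k → (T j).Nonempty := fun j hj => not_not.mp (Nat.find_min hex hj)
    have hkt : k + 1 < t := lt_of_le_of_lt (Nat.succ_le_succ (Nat.find_le hi0')) hi0t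
    -- basic facts about γ 0 .. γ k
    have hγE : ∀ j, j ≤ k → γ j ∈ E := by
      intro j
      induction j with
      | zero => intro _; exact hγ0mem
      | succ j ih =>
        intro hj
        exact (hTmem j (hkmin j (Nat.lt_of_succ_le hj))).1
    have halt : ∀ j, j + 1 ≤ k → f.eval (γ (j+1)) = - f.eval (γ j) := by
      intro j hj
      exact (hTmem j (hkmin j (Nat.lt_of_succ_le hj))).2.2
    have hmono : ∀ j, j + 1 ≤ k → γ j < γ (j+1) := by
      intro j hj
      have hm := hTmem j (hkmin j (Nat.lt_of_succ_le hj))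
      rcases lt_or_eq_of_le hm.2.1 with h | h
      · exact h
      · exfalso
        have := hm.2.2
        rw [← h] at this
        have hz : f.eval (γ j) = 0 := by linarith
        exact hfne0 _ (hγE j (le_of_lt (Nat.lt_of_succ_le hj))) hz
    have hmono_le : ∀ a b, a ≤ b → b ≤ k → γ a ≤ γ b := by
      intro a b hab hbk
      induction b with
      | zero => simp_all
      | succ b ih =>
        rcases Nat.lt_or_ge a (b+1) with h | h
        · have h1' : γ b ≤ γ (b+1) := (hmono b hbk).le
          exact le_trans (ih (Nat.lt_succ_iff.mp h) (le_trans (Nat.le_succ b) hbk)) h1'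
        · have : a = b + 1 := le_antisymm hab h
          rw [this]
    have hblock : ∀ j, j + 1 ≤ k → ∀ x ∈ E, γ j ≤ x → x < γ (j+1) → f.eval x = f.eval (γ j) := by
      intro j hj x hx hge hlt
      have habs : |f.eval x| = |f.eval (γ j)| := by
        rw [hx.2, (hγE j (le_of_lt (Nat.lt_of_succ_le hj))).2]
      rcases abs_eq_abs.mp habs with h | h
      · exact h
      · exfalso
        have : x ∈ T j := ⟨hx, hge, h⟩
        exact absurd (hTle j x this) (not_le.mpr hlt)
    have htail : ∀ x ∈ E, γ k ≤ x → f.eval x = f.eval (γ k) := by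
      intro x hx hge
      have habs : |f.eval x| = |f.eval (γ k)| := by
        rw [hx.2, (hγE k le_rfl).2]
      rcases abs_eq_abs.mp habs with h | h
      · exact h
      · exact absurd ⟨hx, hge, h⟩ (fun hc => hk ⟨x, hc⟩)
    -- separator points
    set b : ℕ → ℝ := fun j => sSup (E ∩ Ico (γ j) (γ (j+1))) with hbdef
    set r : ℕ → ℝ := fun j => (b j + γ (j+1)) / 2 with hrdef
    have hbfacts : ∀ j, j + 1 ≤ k → γ j ≤ b j ∧ b j < γ (j+1) ∧
        (∀ x ∈ E, γ j ≤ x → x < γ (j+1) → x ≤ b j) := by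
      intro j hj
      have hjk : j ≤ k := le_of_lt (Nat.lt_of_succ_le hj)
      have hSne : γ j ∈ E ∩ Ico (γ j) (γ (j+1)) := ⟨hγE j hjk, le_refl _, hmono j hj⟩
      have hSbdd : BddAbove (E ∩ Ico (γ j) (γ (j+1))) :=
        ⟨γ (j+1), fun x hx => hx.2.2.le⟩
      have hble : ∀ x ∈ E, γ j ≤ x → x < γ (j+1) → x ≤ b j := by
        intro x hx h1' h2'
        exact le_csSup hSbdd ⟨hx, h1', h2'⟩
      have hbcl : b j ∈ closure (E ∩ Ico (γ j) (γ (j+1))) :=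
        csSup_mem_closure ⟨γ j, hSne⟩ hSbdd
      have hsub1 : closure (E ∩ Ico (γ j) (γ (j+1))) ⊆ {x | f.eval x = f.eval (γ j)} := by
        apply closure_minimal
        · intro x hx
          exact hblock j hj x hx.1 hx.2.1 hx.2.2
        · exact isClosed_eq f.continuous continuous_const
      have hsub2 : closure (E ∩ Ico (γ j) (γ (j+1))) ⊆ Icc (γ j) (γ (j+1)) := by
        apply closure_minimal
        · exact fun x hx => ⟨hx.2.1, hx.2.2.le⟩
        · exact isClosed_Icc
      have hfb : f.eval (b j) = f.eval (γ j) := hsub1 hbcl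
      have hbIcc := hsub2 hbcl
      refine ⟨hbIcc.1, ?_, hble⟩
      rcases lt_or_eq_of_le hbIcc.2 with h | h
      · exact h
      · exfalso
        have h2' := halt j hj
        rw [← h, hfb] at h2'
        have hz : f.eval (γ j) = 0 := by linarith
        exact hfne0 _ (hγE j hjk) hz
    have hrfacts : ∀ j, j + 1 ≤ k → b j < r j ∧ r j < γ (j+1) := by
      intro j hj
      obtain ⟨h1', h2', _⟩ := hbfacts j hj
      constructor
      · rw [hrdef]; simp only; linarith
      · rw [hrdef]; simp only; linarith
    have hrα : ∀ j, j + 1 ≤ k → 0 < r j ∧ r j < α := by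
      intro j hj
      obtain ⟨h1', h2'⟩ := hrfacts j hj
      obtain ⟨hb1, _, _⟩ := hbfacts j hj
      have hγjpos := hEpos _ (hγE j (le_of_lt (Nat.lt_of_succ_le hj)))
      have hγj1 := (hEsub (hγE (j+1) hj)).2
      constructor
      · linarith
      · linarith [hmono j hj]
    -- block decomposition for x ∈ E
    have hblockx : ∀ x ∈ E, ∃ j, j ≤ k ∧ f.eval x = f.eval (γ j) ∧
        (∀ i, i < j → r i < x) ∧ (∀ i, j ≤ i → i + 1 ≤ k → x < r i) := by
      intro x hx
      set j := Nat.findGreatest (fun j => γ j ≤ x) k with hjdef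
      have hjle : j ≤ k := Nat.findGreatest_le k
      have hγjx : γ j ≤ x := by
        have := Nat.findGreatest_spec (P := fun j => γ j ≤ x) (m := 0) (Nat.zero_le k)
          (hγ0le x hx)
        rw [← hjdef] at this
        exact this
      have hmax : j < k → x < γ (j+1) := by
        intro hjk
        by_contra hcon
        push_neg at hcon
        have h5 : j + 1 ≤ j := by
          rw [hjdef]
          exact Nat.le_findGreatest (P := fun j => γ j ≤ x) (Nat.succ_le_of_lt hjk) hcon
        omega
      have hfx : f.eval x = f.eval (γ j) := by
        rcases lt_or_eq_of_le hjle with h | h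
        · exact hblock j (Nat.succ_le_of_lt h) x hx hγjx (hmax h)
        · rw [h]; exact htail x hx (h ▸ hγjx)
      refine ⟨j, hjle, hfx, ?_, ?_⟩
      · intro i hi
        have h1' : r i < γ (i+1) := (hrfacts i (Nat.succ_le_of_lt (lt_of_lt_of_le hi hjle))).2
        have h2' : γ (i+1) ≤ γ j := hmono_le (i+1) j hi hjle
        linarith
      · intro i hij hik
        have hjk : j < k := lt_of_le_of_lt hij (Nat.lt_of_succ_le hik)
        have hxlt := hmax hjk
        rcases lt_or_eq_of_le hij with h | h
        · -- j < i : x < γ (j+1) ≤ γ i ≤ b i < r i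
          have h2' : γ (j+1) ≤ γ i := hmono_le (j+1) i h (le_of_lt (Nat.lt_of_succ_le hik))
          obtain ⟨hb1, _, _⟩ := hbfacts i hik
          have h3' := (hrfacts i hik).1
          linarith
        · -- i = j : x ≤ b j < r j
          obtain ⟨_, _, hble⟩ := hbfacts i hik
          have hgi : γ i ≤ x := h ▸ hγjx
          have hlt2 : x < γ (i+1) := by rw [← h]; exact hxlt
          have h4 := hble x hx hgi hlt2
          have h3' := (hrfacts i hik).1
          linarith
    -- alternation power identity
    have hpow : ∀ j, j ≤ k → f.eval (γ k) = (-1:ℝ)^(k-j) * f.eval (γ j) := by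
      have key : ∀ d j, j + d ≤ k → f.eval (γ (j + d)) = (-1:ℝ)^d * f.eval (γ j) := by
        intro d
        induction d with
        | zero => intro j _; simp
        | succ d ih =>
          intro j hjd
          have h1' : j + d ≤ k := by omega
          have h2' : (j + d) + 1 ≤ k := by omega
          have h3 : j + (d+1) = (j+d) + 1 := by omega
          calc f.eval (γ (j + (d+1))) = f.eval (γ ((j+d)+1)) := by rw [h3]
            _ = - f.eval (γ (j+d)) := halt (j+d) h2'
            _ = - ((-1:ℝ)^d * f.eval (γ j)) := by rw [ih j h1']
            _ = (-1:ℝ)^(d+1) * f.eval (γ j) := by ring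
      intro j hj
      have h5 := key (k - j) j (by omega)
      rw [show j + (k - j) = k from by omega] at h5
      exact h5
    -- construct q
    set rstar : ℝ := (α + β)/2 with hrstar
    set P : Polynomial ℝ := X * ∏ i ∈ Finset.range k, (X - C (r i)) with hP
    set w : Polynomial ℝ := if 0 < f.eval (γ k) then X - C rstar else 1 with hw
    set q : Polynomial ℝ := P * w with hq
    have hPev : ∀ x : ℝ, P.eval x = x * ∏ i ∈ Finset.range k, (x - r i) := by
      intro x
      simp [hP, eval_prod]
    have hwev : ∀ x : ℝ, w.eval x = if 0 < f.eval (γ k) then x - rstar else 1 := by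
      intro x
      by_cases hc : 0 < f.eval (γ k) <;> simp [hw, hc]
    refine ⟨k, hkt, q, ?_, ?_, ?_, ?_⟩
    · -- degree bound
      have hPdeg : P.natDegree ≤ 1 + k := by
        refine le_trans (natDegree_mul_le) ?_
        have h1' : (X : Polynomial ℝ).natDegree = 1 := natDegree_X
        have h2' : (∏ i ∈ Finset.range k, ((X : Polynomial ℝ) - C (r i))).natDegree ≤ k := by
          refine le_trans (natDegree_prod_le _ _) ?_
          apply le_trans (Finset.sum_le_sum fun i _ => le_of_eq (natDegree_X_sub_C (r i)))
          simp
        omega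
      have hwdeg : w.natDegree ≤ 1 := by
        by_cases hc : 0 < f.eval (γ k)
        · simp [hw, hc, natDegree_X_sub_C]
        · simp [hw, hc]
      calc q.natDegree ≤ P.natDegree + w.natDegree := natDegree_mul_le
        _ ≤ (1 + k) + 1 := by omega
        _ ≤ t := by omega
    · simp [hq, hPev 0]
    · -- the sign condition on E
      intro x hxI hxM
      have hxE : x ∈ E := ⟨hxI, hxM⟩
      obtain ⟨j, hjk, hfx, hlo, hhi⟩ := hblockx x hxE
      -- split the product
      have hsplit : ∏ i ∈ Finset.range k, (x - r i) =
          (∏ i ∈ Finset.range j, (x - r i)) * ∏ i ∈ Finset.range (k - j), (x - r (j + i)) := by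
        have h2 := Finset.prod_range_add (fun i => (x - r i)) j (k - j)
        rw [show j + (k - j) = k from by omega] at h2
        exact h2
      have hA : 0 < ∏ i ∈ Finset.range j, (x - r i) := by
        apply Finset.prod_pos
        intro i hi
        have := hlo i (Finset.mem_range.mp hi)
        linarith
      have hBneg : ∏ i ∈ Finset.range (k - j), (x - r (j + i)) =
          (-1:ℝ)^(k-j) * ∏ i ∈ Finset.range (k - j), (r (j + i) - x) := by
        have hterm : ∀ i, (x - r (j+i)) = (-1) * (r (j+i) - x) := fun i => by ring
        rw [Finset.prod_congr rfl (fun i _ => hterm i), Finset.prod_mul_distrib,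
          Finset.prod_const, Finset.card_range]
      have hC : 0 < ∏ i ∈ Finset.range (k - j), (r (j + i) - x) := by
        apply Finset.prod_pos
        intro i hi
        have hi' := Finset.mem_range.mp hi
        have := hhi (j + i) (Nat.le_add_right j i) (by omega)
        linarith
      have hγkx : f.eval (γ k) = (-1:ℝ)^(k-j) * f.eval x := by
        rw [hfx]; exact hpow j hjk
      have hfP : 0 < f.eval (γ k) * (f.eval x * P.eval x) := by
        rw [hPev, hsplit, hBneg, hγkx]
        have hxpos := hEpos x hxE
        have hsq : ((-1:ℝ)^(k-j)) * ((-1:ℝ)^(k-j)) = 1 := by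
          rw [← pow_add]
          simp [pow_add, ← two_mul, pow_mul]
        have hfx0 : f.eval x ≠ 0 := hfne0 x hxE
        have : (-1:ℝ)^(k-j) * f.eval x * (f.eval x * (x * ((∏ i ∈ Finset.range j, (x - r i)) *
            ((-1:ℝ)^(k-j) * ∏ i ∈ Finset.range (k - j), (r (j + i) - x))))) =
            (((-1:ℝ)^(k-j)) * ((-1:ℝ)^(k-j))) * ((f.eval x)^2 * (x * ((∏ i ∈ Finset.range j, (x - r i)) *
            (∏ i ∈ Finset.range (k - j), (r (j + i) - x))))) := by ring
        rw [this, hsq, one_mul]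
        have : 0 < (f.eval x)^2 := by positivity
        positivity
      -- conclude with w
      have hqev : q.eval x = P.eval x * w.eval x := by simp [hq]
      by_cases hc : 0 < f.eval (γ k)
      · have hwx : w.eval x = x - rstar := by rw [hwev]; simp [hc]
        have hwneg : w.eval x < 0 := by
          rw [hwx, hrstar]
          have h6 := hxI.2
          linarith
        have hfPx : 0 < f.eval x * P.eval x := by
          rcases mul_pos_iff.mp hfP with ⟨_, h2'⟩ | ⟨h1', _⟩
          · exact h2'
          · exact absurd hc (not_lt.mpr h1'.le)
        rw [hqev, ← mul_assoc]
        exact mul_neg_of_pos_of_neg hfPx hwneg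
      · have hwx : w.eval x = 1 := by rw [hwev]; simp [hc]
        have hcneg : f.eval (γ k) < 0 := by
          rcases lt_or_eq_of_le (not_lt.mp hc) with h | h
          · exact h
          · exact absurd h (hfne0 _ (hγE k le_rfl))
        have hfPx : f.eval x * P.eval x < 0 := by
          rcases mul_pos_iff.mp hfP with ⟨h1', _⟩ | ⟨_, h2'⟩
          · exact absurd h1' (not_lt.mpr hcneg.le)
          · exact h2'
        rw [hqev, hwx, mul_one]
        exact hfPx
    · -- nonnegativity on [β, 1]
      intro x hx
      have hxβ : β ≤ x := hx.1
      have hqev : q.eval x = (x * ∏ i ∈ Finset.range k, (x - r i)) * w.eval x := by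
        simp [hq, hPev]
      have hxpos : 0 < x := by linarith
      have hprodpos : 0 < ∏ i ∈ Finset.range k, (x - r i) := by
        apply Finset.prod_pos
        intro i hi
        have := (hrα i (Nat.succ_le_of_lt (Finset.mem_range.mp hi))).2
        linarith
      have hwpos : 0 < w.eval x := by
        rw [hwev]
        by_cases hc : 0 < f.eval (γ k)
        · simp only [hc, if_true, hrstar]
          linarith
        · simp [hc]
      rw [hqev]
      positivity

theorem minimizer_equioscillatory (t : ℕ) (ht : 1 ≤ t) (α β : ℝ)
    (h0α : 0 < α) (hαβ : α < β) (hβ1 : β < 1)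
    (f : Polynomial ℝ) (hdeg : f.natDegree ≤ t) (h0 : f.eval 0 = 0) (h1 : f.eval 1 = 1)
    (hmin : 0 < sInf ((fun x => |f.eval x|) '' Set.Icc β 1))
    (hopt : ∀ g : Polynomial ℝ, g.natDegree ≤ t → g.eval 0 = 0 → g.eval 1 = 1 →
      0 < sInf ((fun x => |g.eval x|) '' Set.Icc β 1) →
      ratioObjective α β f ≤ ratioObjective α β g) :
    Equioscillatory f t 0 α := by
  by_contra hne
  have hne' : ¬ (∃ γ : ℕ → ℝ,
      (∀ s, s + 1 < t → γ s < γ (s + 1)) ∧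
      (∀ s < t, γ s ∈ Set.Icc 0 α) ∧
      (∀ s < t, |f.eval (γ s)| = sSup ((fun x => |f.eval x|) '' Set.Icc 0 α)) ∧
      (∀ s, s + 1 < t → f.eval (γ (s + 1)) = - f.eval (γ s))) := fun h => hne h
  obtain ⟨k, hkt, q, hqdeg, hq0, hqE, hqβ⟩ :=
    exists_corrector t ht α β h0α hαβ hβ1 f hdeg h0 h1 hne'
  obtain ⟨g, hg1, hg2, hg3, hg4, hg5⟩ :=
    perturb_better t α β h0α hαβ hβ1 f h1 hmin q hqdeg hq0 hdeg h0 hqE hqβ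
  exact absurd (hopt g hg1 hg2 hg3 hg4) (not_le.mpr hg5)
end

section
/- For every integer t ≥ 1 and real number 0 < α < 1, the polynomial f_t^⋆ is t-equioscillatory on [0, α] with equioscillation points γ_s := α·(cos(πs/t) + cos(π/(2t)))/(1 + cos(π/(2t))) for 0 ≤ s ≤ t−1 (listed in decreasing order); that is, |f_t^⋆(γ_s)| = max_{λ∈[0,α]} |f_t^⋆(λ)| for every 0 ≤ s ≤ t−1 and the values f_t^⋆(γ_s) alternate in sign as s ranges over 0,1,…,t−1. -/
open Polynomial Real

lemma chebT_deg_coeff (n : ℕ) :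
    (Polynomial.Chebyshev.T ℝ (n : ℤ)).natDegree ≤ n ∧
      (Polynomial.Chebyshev.T ℝ (n : ℤ)).coeff n = 2 ^ (n - 1) := by
  induction n using Nat.twoStepInduction with
  | zero => simp [Polynomial.Chebyshev.T_zero]
  | one => simp [Polynomial.Chebyshev.T_one]
  | more k ih2 ih1 =>
    have h2 : ((k + 2 : ℕ) : ℤ) = (k : ℤ) + 2 := by push_cast; ring
    rw [h2, Polynomial.Chebyshev.T_add_two]
    have h1 : ((k : ℤ) + 1) = ((k + 1 : ℕ) : ℤ) := by push_cast; ring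
    rw [h1]
    have c2 : (C (2:ℝ)) = 2 := map_ofNat C 2
    have hC : (2 : ℝ[X]) * X * Polynomial.Chebyshev.T ℝ ((k+1 : ℕ) : ℤ)
        = C 2 * (X * Polynomial.Chebyshev.T ℝ ((k+1 : ℕ) : ℤ)) := by
      rw [c2]; ring
    constructor
    · refine (natDegree_sub_le _ _).trans ?_
      rw [hC]
      refine max_le ?_ (ih2.1.trans (by omega))
      calc (C 2 * (X * Polynomial.Chebyshev.T ℝ ((k+1:ℕ):ℤ))).natDegree
          ≤ (C (2:ℝ)).natDegree + (X * Polynomial.Chebyshev.T ℝ ((k+1:ℕ):ℤ)).natDegree :=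
            natDegree_mul_le
        _ ≤ 0 + (1 + (k+1)) := add_le_add (natDegree_C _).le
              (natDegree_mul_le.trans (add_le_add natDegree_X_le ih1.1))
        _ = k + 2 := by ring
    · rw [coeff_sub, hC, coeff_C_mul, coeff_X_mul]
      rw [ih1.2, coeff_eq_zero_of_natDegree_lt (ih2.1.trans_lt (by omega))]
      simp [pow_succ]
      ring

open Finset

lemma node_mem_Icc {t s : ℕ} (ht : 1 ≤ t) (hs : s < t) :
    Real.pi * ((s:ℝ) + 1/2) / t ∈ Set.Icc 0 Real.pi := by
  have ht' : (0:ℝ) < t := by positivity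
  constructor
  · positivity
  · rw [div_le_iff₀ ht']
    have : (s:ℝ) + 1/2 ≤ t := by
      have : (s:ℝ) + 1 ≤ t := by exact_mod_cast hs
      linarith
    nlinarith [Real.pi_pos]

lemma chebT_eq_prod (t : ℕ) (ht : 1 ≤ t) :
    Polynomial.Chebyshev.T ℝ (t : ℤ) =
      C ((2:ℝ)^(t-1)) * ∏ s ∈ Finset.range t,
        (X - C (Real.cos (Real.pi * ((s:ℝ) + 1/2) / t))) := by
  set B : ℝ[X] := ∏ s ∈ Finset.range t, (X - C (Real.cos (Real.pi * ((s:ℝ) + 1/2) / t))) with hB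
  have hmono : B.Monic := monic_prod_of_monic _ _ fun s _ => monic_X_sub_C _
  have hdegB : B.natDegree = t := by
    rw [hB, natDegree_prod_of_monic _ _ fun s _ => monic_X_sub_C _]
    simp [natDegree_X_sub_C]
  have ht' : (0:ℝ) < t := by positivity
  have key : Polynomial.Chebyshev.T ℝ (t : ℤ) - C ((2:ℝ)^(t-1)) * B = 0 := by
    apply Polynomial.eq_zero_of_degree_lt_of_eval_index_eq_zero
      (v := fun s : ℕ => Real.cos (Real.pi * ((s:ℝ) + 1/2) / t)) (Finset.range t)
    · -- injectivity
      intro a ha b hb hab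
      simp only [Finset.coe_range, Set.mem_Iio] at ha hb
      have := Real.injOn_cos (node_mem_Icc ht ha) (node_mem_Icc ht hb) hab
      field_simp at this
      have h : (a:ℝ) = b := by linarith
      exact_mod_cast h
    · -- degree
      rw [Finset.card_range, degree_lt_iff_coeff_zero]
      intro m hm
      rw [coeff_sub, coeff_C_mul]
      rcases eq_or_lt_of_le hm with h | h
      · subst h
        rw [(chebT_deg_coeff t).2, ← hdegB, hmono.coeff_natDegree]
        simp
      · rw [coeff_eq_zero_of_natDegree_lt ((chebT_deg_coeff t).1.trans_lt h),
          coeff_eq_zero_of_natDegree_lt (by omega : B.natDegree < m)]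
        simp
    · -- evaluation
      intro s hs
      rw [Finset.mem_range] at hs
      rw [eval_sub, eval_mul, eval_C]
      have hBz : B.eval (Real.cos (Real.pi * ((s:ℝ) + 1/2) / t)) = 0 := by
        rw [hB, eval_prod]
        exact Finset.prod_eq_zero (Finset.mem_range.mpr hs) (by simp)
      rw [hBz, Polynomial.Chebyshev.T_real_cos]
      have : ((t:ℤ):ℝ) * (Real.pi * ((s:ℝ) + 1/2) / t) = (s:ℝ) * Real.pi + Real.pi/2 := by
        push_cast
        field_simp
      rw [this, Real.cos_add, Real.cos_pi_div_two, Real.sin_pi_div_two, Real.sin_nat_mul_pi]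
      ring
  exact sub_eq_zero.mp key

set_option maxHeartbeats 2000000 in
theorem chebyshev_equioscillation_points (t : ℕ) (ht : 1 ≤ t) (α : ℝ)
    (h0α : 0 < α) (hα1 : α < 1)
    (r : ℕ → ℝ)
    (hr : ∀ s, r s = α * (Real.cos (Real.pi * ((s : ℝ) + 1/2) / (t : ℝ)) +
        Real.cos (Real.pi / (2 * (t : ℝ)))) / (1 + Real.cos (Real.pi / (2 * (t : ℝ)))))
    (f : Polynomial ℝ)
    (hf : f = ∏ s ∈ Finset.range t,
        Polynomial.C ((1 - r s)⁻¹) * (Polynomial.X - Polynomial.C (r s)))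
    (γ : ℕ → ℝ)
    (hγ : ∀ s, γ s = α * (Real.cos (Real.pi * (s : ℝ) / (t : ℝ)) +
        Real.cos (Real.pi / (2 * (t : ℝ)))) / (1 + Real.cos (Real.pi / (2 * (t : ℝ))))) :
    (∀ s, s + 1 < t → γ (s + 1) < γ s) ∧
    (∀ s < t, γ s ∈ Set.Icc 0 α) ∧
    (∀ s < t, |f.eval (γ s)| = sSup ((fun x => |f.eval x|) '' Set.Icc 0 α)) ∧
    (∀ s, s + 1 < t → f.eval (γ (s + 1)) = - f.eval (γ s)) := by
  have ht' : (0:ℝ) < t := by exact_mod_cast Nat.pos_of_ne_zero (by omega)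
  have hπ := Real.pi_pos
  set c : ℝ := Real.cos (Real.pi / (2 * (t:ℝ))) with hcdef
  have hc0 : 0 ≤ c := by
    apply Real.cos_nonneg_of_mem_Icc
    constructor
    · have : 0 ≤ Real.pi / (2 * (t:ℝ)) := by positivity
      linarith
    · rw [div_le_div_iff₀ (by positivity) (by norm_num)]
      nlinarith [(by exact_mod_cast ht : (1:ℝ) ≤ t)]
  have hc1 : c ≤ 1 := Real.cos_le_one _
  have h1c : (0:ℝ) < 1 + c := by linarith
  set xs : ℕ → ℝ := fun s => Real.cos (Real.pi * ((s:ℝ) + 1/2) / t) with hxsdef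
  have hxs1 : ∀ s, xs s ≤ 1 := fun s => Real.cos_le_one _
  set X₁ : ℝ := (1 + c)/α - c with hX1def
  have hX1 : 1 < X₁ := by
    rw [hX1def, lt_sub_iff_add_lt, lt_div_iff₀ h0α]
    nlinarith
  set B : Polynomial ℝ := ∏ s ∈ Finset.range t, (Polynomial.X - Polynomial.C (xs s)) with hBdef
  set D : ℝ := B.eval X₁ with hDdef
  have hBev : ∀ y : ℝ, B.eval y = ∏ s ∈ Finset.range t, (y - xs s) := by
    intro y; rw [hBdef, Polynomial.eval_prod]; simp
  have hD : 0 < D := by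
    rw [hDdef, hBev]
    apply Finset.prod_pos
    intro s _
    have := hxs1 s
    linarith
  have hfac : ∀ s, 1 - r s = α * (X₁ - xs s) / (1+c) := by
    intro s
    rw [hr s, hX1def, hxsdef]
    field_simp
    ring
  have h1r : ∀ s, 0 < 1 - r s := by
    intro s
    rw [hfac s]
    have h1 : 0 < X₁ - xs s := by have := hxs1 s; linarith
    positivity
  have key : ∀ x : ℝ, f.eval (α * (x + c) / (1 + c)) = B.eval x / D := by
    intro x
    rw [hf, Polynomial.eval_prod, hDdef, hBev, hBev, ← Finset.prod_div_distrib]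
    apply Finset.prod_congr rfl
    intro s _
    have hne : X₁ - xs s ≠ 0 := by have := hxs1 s; nlinarith
    have hrs : r s = α * (xs s + c) / (1+c) := by rw [hr s]
    have h1rs : (1 : ℝ) - r s = α * (X₁ - xs s) / (1+c) := hfac s
    simp only [Polynomial.eval_mul, Polynomial.eval_C, Polynomial.eval_sub, Polynomial.eval_X]
    rw [h1rs, hrs]
    field_simp
    ring
  -- identity with Chebyshev
  have hprod : ∀ y : ℝ, (Polynomial.Chebyshev.T ℝ (t:ℤ)).eval y = 2^(t-1) * B.eval y := by
    intro y
    rw [chebT_eq_prod t ht]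
    simp [hBdef, hxsdef]
  have hmax : ∀ x : ℝ, -1 ≤ x → x ≤ 1 → |B.eval x| ≤ 1 / 2^(t-1) := by
    intro x hx1 hx2
    have h1 := hprod (Real.cos (Real.arccos x))
    rw [Polynomial.Chebyshev.T_real_cos, Real.cos_arccos hx1 hx2] at h1
    have h2 : B.eval x = Real.cos (((t:ℤ):ℝ) * Real.arccos x) / 2^(t-1) := by
      field_simp at h1 ⊢
      linarith
    rw [h2, abs_div, abs_of_pos (by positivity : (0:ℝ) < (2:ℝ)^(t-1))]
    gcongr
    exact Real.abs_cos_le_one _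
  have hBcos : ∀ j : ℕ, B.eval (Real.cos (Real.pi * (j:ℝ) / t)) = (-1)^j / 2^(t-1) := by
    intro j
    have h1 := hprod (Real.cos (Real.pi * (j:ℝ) / t))
    rw [Polynomial.Chebyshev.T_real_cos] at h1
    have harg : ((t:ℤ):ℝ) * (Real.pi * (j:ℝ) / t) = (j:ℝ) * Real.pi - 0 := by
      push_cast; field_simp; ring
    rw [harg, Real.cos_nat_mul_pi_sub, Real.cos_zero, mul_one] at h1
    field_simp at h1 ⊢
    linarith
  have hfγ : ∀ j : ℕ, f.eval (γ j) = (-1)^j / (2^(t-1) * D) := by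
    intro j
    rw [hγ j, key, hBcos, div_div]
  set M : ℝ := 1 / (2^(t-1) * D) with hMdef
  have hM : 0 < M := by positivity
  have habs : ∀ j : ℕ, |f.eval (γ j)| = M := by
    intro j
    rw [hfγ j, hMdef, abs_div, abs_pow, abs_neg, abs_one, one_pow,
      abs_of_pos (by positivity : (0:ℝ) < 2^(t-1) * D)]
  -- part 2
  have part2 : ∀ s < t, γ s ∈ Set.Icc 0 α := by
    intro s hs
    have hcos1 : Real.cos (Real.pi * (s:ℝ) / t) ≤ 1 := Real.cos_le_one _
    have hcosc : -c ≤ Real.cos (Real.pi * (s:ℝ) / t) := by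
      have h1 : Real.cos (Real.pi - Real.pi / (2*(t:ℝ))) = -c := by
        rw [Real.cos_pi_sub]
      rw [← h1]
      apply Real.cos_le_cos_of_nonneg_of_le_pi
      · positivity
      · have : 0 < Real.pi / (2*(t:ℝ)) := by positivity
        linarith
      · have hs' : (s:ℝ) ≤ (t:ℝ) - 1 := by
          have : (s:ℝ) + 1 ≤ t := by exact_mod_cast hs
          linarith
        rw [div_le_iff₀ ht']
        have h2 : (Real.pi - Real.pi / (2*(t:ℝ))) * t = Real.pi * t - Real.pi/2 := by
          field_simp
        rw [h2]
        nlinarith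
    constructor
    · rw [hγ s]
      apply div_nonneg _ h1c.le
      apply mul_nonneg h0α.le
      linarith
    · rw [hγ s]
      rw [div_le_iff₀ h1c]
      nlinarith
  -- upper bound on [0, α]
  have hub : ∀ y ∈ Set.Icc (0:ℝ) α, |f.eval y| ≤ M := by
    intro y hy
    obtain ⟨hy0, hyα⟩ := hy
    set x : ℝ := y * (1+c) / α - c with hxdef2
    have hyx : y = α * (x + c) / (1 + c) := by
      rw [hxdef2]
      field_simp
      ring
    have hx2 : x ≤ 1 := by
      rw [hxdef2, sub_le_iff_le_add, div_le_iff₀ h0α]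
      nlinarith
    have hx1 : -1 ≤ x := by
      rw [hxdef2, le_sub_iff_add_le]
      have : 0 ≤ y * (1+c) / α := by positivity
      linarith
    rw [hyx, key, hMdef, abs_div, abs_of_pos hD, ← div_div]
    gcongr
    exact hmax x hx1 hx2
  have hsup : sSup ((fun x => |f.eval x|) '' Set.Icc 0 α) = M := by
    apply IsGreatest.csSup_eq
    constructor
    · exact ⟨γ 0, part2 0 (by omega), habs 0⟩
    · rintro _ ⟨y, hy, rfl⟩
      exact hub y hy
  refine ⟨?_, part2, ?_, ?_⟩
  · intro s hst
    have hst' : (s:ℝ) + 1 < t := by exact_mod_cast hst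
    rw [hγ s, hγ (s+1)]
    push_cast
    have hcos : Real.cos (Real.pi * ((s:ℝ)+1) / t) < Real.cos (Real.pi * (s:ℝ) / t) := by
      have m1 : Real.pi * (s:ℝ)/t ∈ Set.Icc 0 Real.pi :=
        ⟨by positivity, by rw [div_le_iff₀ ht']; nlinarith⟩
      have m2 : Real.pi * ((s:ℝ)+1)/t ∈ Set.Icc 0 Real.pi :=
        ⟨by positivity, by rw [div_le_iff₀ ht']; nlinarith⟩
      have hlt : Real.pi * (s:ℝ)/t < Real.pi * ((s:ℝ)+1)/t := by
        rw [div_lt_div_iff₀ ht' ht']; nlinarith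
      exact Real.strictAntiOn_cos m1 m2 hlt
    gcongr
  · intro s _
    rw [habs s, hsup]
  · intro s _
    rw [hfγ s, hfγ (s+1), pow_succ]
    ring
end

section
/- Let t ≥ 2 be an integer, α > 0, and let f be a real polynomial of degree at most t with f(0) = 0 and max_{λ∈[0,α]} |f(λ)| > 0. Suppose f is t-equioscillatory on [0,α] with equioscillation points 0 < γ_0 < γ_1 < ⋯ < γ_{t−1} ≤ α. Then f(λ) ≠ 0 for every λ > α; that is, all roots of f lie in [0, α]. -/
theorem equioscillatory_roots_in_band (t : ℕ) (ht : 2 ≤ t) (α : ℝ) (hα : 0 < α)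
    (f : Polynomial ℝ) (hdeg : f.natDegree ≤ t) (h0 : f.eval 0 = 0)
    (hpos : 0 < sSup ((fun x => |f.eval x|) '' Set.Icc 0 α))
    (γ : ℕ → ℝ) (hγ0 : 0 < γ 0)
    (hmono : ∀ s, s + 1 < t → γ s < γ (s + 1))
    (hle : ∀ s < t, γ s ≤ α)
    (hmax : ∀ s < t, |f.eval (γ s)| = sSup ((fun x => |f.eval x|) '' Set.Icc 0 α))
    (halt : ∀ s, s + 1 < t → f.eval (γ (s + 1)) = - f.eval (γ s)) :
    ∀ x : ℝ, α < x → f.eval x ≠ 0 := by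
  intro x hx hfx
  set M := sSup ((fun x => |f.eval x|) '' Set.Icc 0 α) with hM
  have hfne : ∀ s < t, f.eval (γ s) ≠ 0 := by
    intro s hs h
    have := hmax s hs
    rw [h, abs_zero] at this
    linarith
  have hfzero : f ≠ 0 := by
    intro h
    exact hfne 0 (by omega) (by simp [h])
  -- γ strictly monotone on indices < t
  have hγmono : ∀ b a, a < b → b < t → γ a < γ b := by
    intro b
    induction b with
    | zero => intro a h; omega
    | succ n ih =>
      intro a hab hbt
      rcases Nat.lt_succ_iff_lt_or_eq.mp hab with h | h
      · exact lt_trans (ih a h (by omega)) (hmono n hbt)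
      · subst h; exact hmono a hbt
  -- a root strictly between consecutive equioscillation points
  have hroot : ∀ s, s + 1 < t → ∃ c ∈ Set.Ioo (γ s) (γ (s+1)), f.eval c = 0 := by
    intro s hs
    have h1 := halt s hs
    have hne := hfne s (by omega)
    have hlt : γ s ≤ γ (s+1) := le_of_lt (hmono s hs)
    have hcont : ContinuousOn (fun y => f.eval y) (Set.Icc (γ s) (γ (s+1))) :=
      f.continuous.continuousOn
    rcases lt_or_gt_of_ne hne with hneg | hpos'
    · have : (0:ℝ) ∈ Set.Ioo (f.eval (γ s)) (f.eval (γ (s+1))) := by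
        exact ⟨hneg, by rw [h1]; linarith⟩
      obtain ⟨c, hc, hc0⟩ := intermediate_value_Ioo hlt hcont this
      exact ⟨c, hc, hc0⟩
    · have : (0:ℝ) ∈ Set.Ioo (f.eval (γ (s+1))) (f.eval (γ s)) := by
        exact ⟨by rw [h1]; linarith, hpos'⟩
      obtain ⟨c, hc, hc0⟩ := intermediate_value_Ioo' hlt hcont this
      exact ⟨c, hc, hc0⟩
  classical
  set ρ : ℕ → ℝ := fun s => if h : s + 1 < t then (hroot s h).choose else 0 with hρ
  have hρspec : ∀ s (h : s + 1 < t), ρ s ∈ Set.Ioo (γ s) (γ (s+1)) ∧ f.eval (ρ s) = 0 := by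
    intro s h
    have := (hroot s h).choose_spec
    simp only [hρ, dif_pos h]
    exact this
  -- basic bounds
  have hρpos : ∀ s, s + 1 < t → 0 < ρ s := by
    intro s h
    have h1 := (hρspec s h).1.1
    rcases Nat.eq_zero_or_pos s with h0' | h0'
    · subst h0'; linarith
    · have := hγmono s 0 h0' (by omega)
      linarith
  have hρltx : ∀ s, s + 1 < t → ρ s < x := by
    intro s h
    have h2 := (hρspec s h).1.2
    have := hle (s+1) h
    linarith
  have hρmono : ∀ a b, a < b → b + 1 < t → ρ a < ρ b := by
    intro a b hab hbt
    have h1 := (hρspec a (by omega)).1.2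
    have h2 := (hρspec b hbt).1.1
    have : γ (a+1) ≤ γ b := by
      rcases Nat.lt_or_ge (a+1) b with h | h
      · exact le_of_lt (hγmono b (a+1) h (by omega))
      · have : a + 1 = b := by omega
        rw [this]
    linarith
  -- our finset of roots
  set Z : Finset ℝ := insert 0 (insert x ((Finset.range (t-1)).image ρ)) with hZ
  have hinj : Set.InjOn ρ (Finset.range (t-1) : Set ℕ) := by
    intro a ha b hb hab
    simp only [Finset.coe_range, Set.mem_Iio] at ha hb
    by_contra hne
    rcases lt_or_gt_of_ne hne with h | h
    · have := hρmono a b h (by omega); linarith [hab.le, hab.ge]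
    · have := hρmono b a h (by omega); linarith [hab.le, hab.ge]
  have hximg : x ∉ (Finset.range (t-1)).image ρ := by
    intro hmem
    obtain ⟨s, hs, hsx⟩ := Finset.mem_image.mp hmem
    have := hρltx s (by simp at hs; omega)
    linarith
  have h0ins : (0:ℝ) ∉ insert x ((Finset.range (t-1)).image ρ) := by
    intro hmem
    rcases Finset.mem_insert.mp hmem with h | h
    · linarith
    · obtain ⟨s, hs, hsx⟩ := Finset.mem_image.mp h
      have := hρpos s (by simp at hs; omega)
      linarith
  have hcard : Z.card = t + 1 := by
    rw [hZ, Finset.card_insert_of_notMem h0ins, Finset.card_insert_of_notMem hximg,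
      Finset.card_image_of_injOn hinj, Finset.card_range]
    omega
  have hZroots : Z ⊆ f.roots.toFinset := by
    intro z hz
    rw [Multiset.mem_toFinset, Polynomial.mem_roots hfzero]
    rcases Finset.mem_insert.mp hz with h | h
    · exact h ▸ h0
    rcases Finset.mem_insert.mp h with h | h
    · exact h ▸ hfx
    · obtain ⟨s, hs, hsx⟩ := Finset.mem_image.mp h
      exact hsx ▸ (hρspec s (by simp at hs; omega)).2
  have : Z.card ≤ t := by
    calc Z.card ≤ f.roots.toFinset.card := Finset.card_le_card hZroots
      _ ≤ Multiset.card f.roots := Multiset.toFinset_card_le _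
      _ ≤ f.natDegree := f.card_roots'
      _ ≤ t := hdeg
  omega
end

section
/- Let A be a real symmetric N×N matrix with 0 ⪯ A ⪯ I_N and tr(A) = K, where 1 ≤ K < N are integers, and let λ_1 ≥ λ_2 ≥ ⋯ ≥ λ_N denote its eigenvalues in non-increasing order. Then 1/(N − K + 1) ≤ λ_K ≤ 1 and 0 ≤ λ_{K+1} ≤ K/(K+1). -/
open Matrix

lemma herm_trace_eq_sum {N : ℕ} (A : Matrix (Fin N) (Fin N) ℝ) (hA : A.IsHermitian) :
    A.trace = ∑ i, hA.eigenvalues i := by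
  conv_lhs => rw [hA.spectral_theorem]
  rw [Unitary.conjStarAlgAut_apply, Matrix.trace_mul_cycle]
  rw [show (star (hA.eigenvectorUnitary : Matrix (Fin N) (Fin N) ℝ)) *
      (hA.eigenvectorUnitary : Matrix (Fin N) (Fin N) ℝ) = 1 from
    Matrix.mem_unitaryGroup_iff'.mp hA.eigenvectorUnitary.2, one_mul,
    Matrix.trace_diagonal]
  simp

lemma eigenvalue_le_one {N : ℕ} (A : Matrix (Fin N) (Fin N) ℝ) (hA : A.IsHermitian)
    (hle : (1 - A).PosSemidef) (i : Fin N) : hA.eigenvalues i ≤ 1 := by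
  set v : Fin N → ℝ := ⇑(hA.eigenvectorBasis i) with hvdef
  have hv := hle.dotProduct_mulVec_nonneg v
  have hnorm : dotProduct (star v) v = 1 := by
    have h3 := real_inner_self_eq_norm_mul_norm (hA.eigenvectorBasis i)
    rw [hA.eigenvectorBasis.orthonormal.1 i, PiLp.inner_apply] at h3
    simpa [dotProduct, hvdef, sq] using h3
  have hT : hA.eigenvalues i = dotProduct (star v) (A *ᵥ v) := by
    rw [hA.eigenvalues_eq i]; simp [hvdef]
  rw [Matrix.sub_mulVec, Matrix.one_mulVec, dotProduct_sub, hnorm, ← hT] at hv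
  linarith

theorem eigenvalue_bounds (N K : ℕ) (hK1 : 1 ≤ K) (hKN : K < N)
    (A : Matrix (Fin N) (Fin N) ℝ) (hA : A.IsHermitian)
    (hpsd : A.PosSemidef) (hle : (1 - A).PosSemidef) (htr : A.trace = K)
    (μ : Fin N → ℝ) (hanti : Antitone μ)
    (hperm : ∃ σ : Equiv.Perm (Fin N), μ = hA.eigenvalues ∘ σ) :
    1 / ((N : ℝ) - K + 1) ≤ μ ⟨K - 1, by omega⟩ ∧ μ ⟨K - 1, by omega⟩ ≤ 1 ∧
    0 ≤ μ ⟨K, hKN⟩ ∧ μ ⟨K, hKN⟩ ≤ (K : ℝ) / ((K : ℝ) + 1) := by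
  obtain ⟨σ, rfl⟩ := hperm
  set μ := hA.eigenvalues ∘ σ with hμ
  have h0 : ∀ i, 0 ≤ μ i := fun i => hpsd.eigenvalues_nonneg _
  have h1 : ∀ i, μ i ≤ 1 := fun i => eigenvalue_le_one A hA hle _
  have hsum : ∑ i, μ i = (K : ℝ) := by
    rw [hμ]
    rw [show ∑ i, (hA.eigenvalues ∘ ⇑σ) i = ∑ i, hA.eigenvalues (σ i) from rfl,
      Equiv.sum_comp σ hA.eigenvalues, ← herm_trace_eq_sum A hA, htr]
  set a : Fin N := ⟨K - 1, by omega⟩ with ha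
  set b : Fin N := ⟨K, hKN⟩ with hb
  -- split sums
  have hsplit : ∑ i ∈ (Finset.Iio a)ᶜ, μ i + ∑ i ∈ Finset.Iio a, μ i = (K : ℝ) := by
    rw [Finset.sum_compl_add_sum]; exact hsum
  have hIio : ∑ i ∈ Finset.Iio a, μ i ≤ (K : ℝ) - 1 := by
    calc ∑ i ∈ Finset.Iio a, μ i ≤ (Finset.Iio a).card • (1 : ℝ) :=
          Finset.sum_le_card_nsmul _ _ _ (fun i _ => h1 i)
      _ = (K : ℝ) - 1 := by
          rw [Fin.card_Iio]; simp [ha]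
          push_cast [Nat.cast_sub hK1]; ring
  have hIci : ∑ i ∈ (Finset.Iio a)ᶜ, μ i ≤ ((N : ℝ) - K + 1) * μ a := by
    calc ∑ i ∈ (Finset.Iio a)ᶜ, μ i ≤ ((Finset.Iio a)ᶜ).card • μ a := by
          refine Finset.sum_le_card_nsmul _ _ _ (fun i hi => hanti ?_)
          simp only [Finset.mem_compl, Finset.mem_Iio, not_lt] at hi
          exact hi
      _ = ((N : ℝ) - K + 1) * μ a := by
          rw [Finset.card_compl, Fin.card_Iio, Fintype.card_fin]
          rw [nsmul_eq_mul]
          congr 1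
          push_cast [Nat.cast_sub (by omega : (a : ℕ) ≤ N)]
          simp only [ha, Fin.val_mk, Nat.cast_sub hK1]
          push_cast; ring
  have hμa : 1 / ((N : ℝ) - K + 1) ≤ μ a := by
    have hNK : (0 : ℝ) < (N : ℝ) - K + 1 := by
      have : (K : ℝ) < N := by exact_mod_cast hKN
      linarith
    rw [div_le_iff₀ hNK]
    nlinarith [h0 a]
  have hIic : (K : ℝ) + 1 ≤ ((K : ℝ) + 1) * μ b + 0 → True := fun _ => trivial
  have hμb : μ b ≤ (K : ℝ) / ((K : ℝ) + 1) := by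
    have h2 : ((K : ℝ) + 1) * μ b ≤ ∑ i ∈ Finset.Iic b, μ i := by
      calc ((K : ℝ) + 1) * μ b = (Finset.Iic b).card • μ b := by
            rw [Fin.card_Iic, nsmul_eq_mul]; simp [hb]
        _ ≤ ∑ i ∈ Finset.Iic b, μ i := by
            refine Finset.card_nsmul_le_sum _ _ _ (fun i hi => hanti ?_)
            exact Finset.mem_Iic.mp hi
    have h3 : ∑ i ∈ Finset.Iic b, μ i ≤ (K : ℝ) := by
      rw [← hsum]
      exact Finset.sum_le_sum_of_subset_of_nonneg (Finset.subset_univ _)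
        (fun i _ _ => h0 i)
    have hKpos : (0 : ℝ) < (K : ℝ) + 1 := by positivity
    rw [le_div_iff₀ hKpos]
    linarith
  exact ⟨hμa, h1 a, h0 b, hμb⟩
end
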